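/- arXiv:math/9901051 — 8 statements merged into one kernel-verified Lean document; each statement's English description precedes it below -/
import Mathlib

section
/- (Theorem III) Let φ, ρ : ℚ_p → ℂ be μ-integrable functions such that φ(x) = 0 and ρ(x) = 0 whenever ‖x‖ > 1, and such that ∫ φ dμ = 0 and ∫ ρ dμ = 0. Then ∫ 𝓕φ(x) · conj(ρ(x)) dμ(x) = 0 (the integrand is integrable and the integral vanishes). In other words, the incoming space D₋ of square-integrable functions supported in the closed unit ball with vanishing integral is orthogonal to its image 𝓕(D₋) under the Fourier transform. -/
/-! On the unit ball `ψ(-x y) = 1` for every `y` in the support of `φ`, so `𝓕φ` equals the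
constant `∫ φ = 0` there, while `ρ` vanishes off the unit ball. Hence `𝓕φ · conj ρ` is
identically zero. -/

open MeasureTheory Complex

/-- Fourier transform on `ℚ_[p]` with respect to the additive character `ψ`
and the Haar measure `μ`: `𝓕φ(x) = ∫ φ(y)·ψ(−x·y) dμ(y)`. -/
noncomputable def fourierT (p : ℕ) [Fact p.Prime] [MeasurableSpace ℚ_[p]]
    (μ : Measure ℚ_[p]) (ψ : ℚ_[p] → ℂ) (φ : ℚ_[p] → ℂ) : ℚ_[p] → ℂ :=
  fun x => ∫ y, φ y * ψ (-(x * y)) ∂μ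

/-- Inverse Fourier transform: `𝓕⁻¹φ(x) = ∫ φ(y)·ψ(x·y) dμ(y)`. -/
noncomputable def fourierInvT (p : ℕ) [Fact p.Prime] [MeasurableSpace ℚ_[p]]
    (μ : Measure ℚ_[p]) (ψ : ℚ_[p] → ℂ) (φ : ℚ_[p] → ℂ) : ℚ_[p] → ℂ :=
  fun x => ∫ y, φ y * ψ (x * y) ∂μ

/-- A Schwartz–Bruhat function on `ℚ_[p]`: locally constant with compact support. -/
def IsSchwartzBruhat {p : ℕ} [Fact p.Prime] (φ : ℚ_[p] → ℂ) : Prop :=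
  IsLocallyConstant φ ∧ HasCompactSupport φ

section FourierUnitBall

variable {p : ℕ} [Fact p.Prime] [MeasurableSpace ℚ_[p]] {μ : Measure ℚ_[p]} {ψ : ℚ_[p] → ℂ}
  {φ : ℚ_[p] → ℂ}

theorem fourierT_eq_integral_of_norm_le_one (hψ_triv : ∀ x : ℚ_[p], ‖x‖ ≤ 1 → ψ x = 1)
    (hφsupp : ∀ x : ℚ_[p], 1 < ‖x‖ → φ x = 0) {x : ℚ_[p]} (hx : ‖x‖ ≤ 1) :
    fourierT p μ ψ φ x = ∫ y, φ y ∂μ := by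
  have hintegrand : ∀ y, φ y * ψ (-(x * y)) = φ y := fun y => by
    rcases le_or_gt ‖y‖ 1 with hy | hy
    · rw [hψ_triv _ (by simpa using mul_le_one₀ hx (norm_nonneg y) hy), mul_one]
    · rw [hφsupp y hy, zero_mul]
  simp only [fourierT, hintegrand]

theorem fourierT_mul_conj_eq_zero (hψ_triv : ∀ x : ℚ_[p], ‖x‖ ≤ 1 → ψ x = 1)
    (hφsupp : ∀ x : ℚ_[p], 1 < ‖x‖ → φ x = 0) (hφint : ∫ x, φ x ∂μ = 0) {ρ : ℚ_[p] → ℂ}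
    (hρsupp : ∀ x : ℚ_[p], 1 < ‖x‖ → ρ x = 0) (x : ℚ_[p]) :
    fourierT p μ ψ φ x * starRingEnd ℂ (ρ x) = 0 := by
  rcases le_or_gt ‖x‖ 1 with hx | hx
  · rw [fourierT_eq_integral_of_norm_le_one hψ_triv hφsupp hx, hφint, zero_mul]
  · rw [hρsupp x hx, map_zero, mul_zero]

end FourierUnitBall

theorem incoming_perp_fourier_incoming_general (p : ℕ) [Fact p.Prime]
    [MeasurableSpace ℚ_[p]]
    (μ : Measure ℚ_[p])
    (ψ : ℚ_[p] → ℂ)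
    (hψ_triv : ∀ x : ℚ_[p], ‖x‖ ≤ 1 → ψ x = 1)
    (φ ρ : ℚ_[p] → ℂ)
    (hφsupp : ∀ x : ℚ_[p], 1 < ‖x‖ → φ x = 0)
    (hρsupp : ∀ x : ℚ_[p], 1 < ‖x‖ → ρ x = 0)
    (hφint : ∫ x, φ x ∂μ = 0) :
    Integrable (fun x => fourierT p μ ψ φ x * (starRingEnd ℂ) (ρ x)) μ ∧
      ∫ x, fourierT p μ ψ φ x * (starRingEnd ℂ) (ρ x) ∂μ = 0 := by
  have hzero : (fun x => fourierT p μ ψ φ x * (starRingEnd ℂ) (ρ x)) = 0 :=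
    funext (fourierT_mul_conj_eq_zero hψ_triv hφsupp hφint hρsupp)
  rw [hzero]
  exact ⟨integrable_zero _ _ _, integral_zero _ _⟩

/-- Theorem III: the incoming space `D₋` (functions supported in the closed unit
ball with vanishing integral) is orthogonal to its Fourier transform `𝓕(D₋)`. -/
theorem incoming_perp_fourier_incoming (p : ℕ) [Fact p.Prime]
    [MeasurableSpace ℚ_[p]] [BorelSpace ℚ_[p]]
    (μ : Measure ℚ_[p]) [μ.IsAddHaarMeasure]
    (hμ : μ {x : ℚ_[p] | ‖x‖ ≤ 1} = 1)
    (ψ : ℚ_[p] → ℂ) (hψ_cont : Continuous ψ)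
    (hψ_add : ∀ x y : ℚ_[p], ψ (x + y) = ψ x * ψ y)
    (hψ_norm : ∀ x : ℚ_[p], ‖ψ x‖ = 1)
    (hψ_triv : ∀ x : ℚ_[p], ‖x‖ ≤ 1 → ψ x = 1)
    (hψ_nontriv : ∃ x₀ : ℚ_[p], ‖x₀‖ = (p : ℝ) ∧ ψ x₀ ≠ 1)
    (φ ρ : ℚ_[p] → ℂ) (hφ : Integrable φ μ) (hρ : Integrable ρ μ)
    (hφsupp : ∀ x : ℚ_[p], 1 < ‖x‖ → φ x = 0)
    (hρsupp : ∀ x : ℚ_[p], 1 < ‖x‖ → ρ x = 0)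
    (hφint : ∫ x, φ x ∂μ = 0) (hρint : ∫ x, ρ x ∂μ = 0) :
    Integrable (fun x => fourierT p μ ψ φ x * (starRingEnd ℂ) (ρ x)) μ ∧
      ∫ x, fourierT p μ ψ φ x * (starRingEnd ℂ) (ρ x) ∂μ = 0 :=
  incoming_perp_fourier_incoming_general p μ ψ hψ_triv φ ρ hφsupp hρsupp hφint
end

section
/- (Theorem V, trivial-character component: the unit-invariant part of the interacting space is one-dimensional, spanned by Tate's function ω) Let φ : ℚ_p → ℂ be measurable and square-integrable with respect to μ, and invariant under dilation by units: φ(u·x) = φ(x) for every x ∈ ℚ_p and every u with ‖u‖ = 1. Assume that for every Schwartz–Bruhat function g : ℚ_p → ℂ with g(x) = 0 whenever ‖x‖ > 1 and ∫ g dμ = 0, one has both ∫ φ(x)·conj(g(x)) dμ(x) = 0 and ∫ φ(x)·conj(𝓕g(x)) dμ(x) = 0. Then there exists c ∈ ℂ such that φ(x) = c·(indicator of {x : ‖x‖ ≤ 1})(x) for μ-almost every x. -/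
/-!
Pairing `φ` with differences of indicators of balls `p^k ℤ_p` that lie in `D₋`, and with their
Fourier transforms (again such differences), shows that `φ` and `c 1_{ℤ_p}`, where
`c = ∫_{ℤ_p} φ / μ(ℤ_p)`, have the same integral over every ball. Unit invariance makes `φ` constant
on each sphere `{‖x‖ = p^k}`, a difference of two balls of positive measure, so `φ` agrees with
`c 1_{ℤ_p}` everywhere except at `0`.
-/
open MeasureTheory Complex

section CharacterIntegral

variable {G : Type*} [AddGroup G] [MeasurableSpace G] [MeasurableAdd G]
  {μ : Measure G} [μ.IsAddRightInvariant]

theorem setIntegral_addSubgroup_eq_zero {χ : G → ℂ} (hχ : ∀ x y, χ (x + y) = χ x * χ y)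
    {H : AddSubgroup G} (hH : MeasurableSet (H : Set G)) {y₀ : G} (hy₀ : y₀ ∈ H)
    (hχy₀ : χ y₀ ≠ 1) : ∫ y in (H : Set G), χ y ∂μ = 0 := by
  set f := (H : Set G).indicator χ
  have hshift : ∀ y, f (y + y₀) = χ y₀ * f y := by
    intro y
    by_cases hy : y ∈ H
    · simp [f, hy, H.add_mem hy hy₀, hχ, mul_comm]
    · simp [f, hy, (H.add_mem_cancel_right hy₀).not.mpr hy]
  have hfix : χ y₀ * ∫ y, f y ∂μ = ∫ y, f y ∂μ := by
    rw [← integral_const_mul, ← integral_add_right_eq_self f y₀]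
    simp_rw [hshift]
  rw [← integral_indicator hH]
  by_contra h
  exact hχy₀ ((mul_eq_right₀ h).mp hfix)

end CharacterIntegral

theorem integral_mul_conj_indicator_sub {X : Type*} [MeasurableSpace X] {μ : Measure X}
    {φ : X → ℂ} {s t : Set X} (hs : MeasurableSet s) (ht : MeasurableSet t)
    (hφs : IntegrableOn φ s μ) (hφt : IntegrableOn φ t μ) (a b : ℂ) :
    ∫ x, φ x * (starRingEnd ℂ)
        (a * s.indicator (fun _ => 1) x - b * t.indicator (fun _ => 1) x) ∂μ
      = (starRingEnd ℂ) a * ∫ x in s, φ x ∂μ - (starRingEnd ℂ) b * ∫ x in t, φ x ∂μ := by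
  have hpt : ∀ x, φ x * (starRingEnd ℂ)
      (a * s.indicator (fun _ => 1) x - b * t.indicator (fun _ => 1) x)
      = (starRingEnd ℂ) a * s.indicator φ x - (starRingEnd ℂ) b * t.indicator φ x := by
    intro x
    by_cases hxs : x ∈ s <;> by_cases hxt : x ∈ t <;> simp [hxs, hxt, mul_comm, mul_sub]
  simp_rw [hpt]
  rw [integral_sub ((hφs.integrable_indicator hs).const_mul _)
      ((hφt.integrable_indicator ht).const_mul _), integral_const_mul, integral_const_mul,
    integral_indicator hs, integral_indicator ht]

theorem apply_eq_of_norm_eq {K α : Type*} [NormedDivisionRing K] {f : K → α}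
    (hf : ∀ u x : K, ‖u‖ = 1 → f (u * x) = f x) {x y : K} (h : ‖x‖ = ‖y‖) : f x = f y := by
  rcases eq_or_ne y 0 with rfl | hy
  · rw [norm_zero, norm_eq_zero] at h
    rw [h]
  · have hu : ‖x / y‖ = 1 := by rw [norm_div, h, div_self (norm_ne_zero_iff.mpr hy)]
    simpa [div_mul_cancel₀ x hy] using hf (x / y) y hu

namespace Padic

variable {p : ℕ} [Fact p.Prime]

/-- An additive character of `ℚ_[p]` with conductor `ℤ_[p]`. -/
structure IsUnramifiedCharacter (ψ : ℚ_[p] → ℂ) : Prop where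
  map_add_eq_mul : ∀ x y : ℚ_[p], ψ (x + y) = ψ x * ψ y
  eq_one_of_norm_le_one : ∀ x : ℚ_[p], ‖x‖ ≤ 1 → ψ x = 1
  exists_ne_one : ∃ x₀ : ℚ_[p], ‖x₀‖ = (p : ℝ) ∧ ψ x₀ ≠ 1

/-- `φ` is orthogonal to `D₋`, the Schwartz–Bruhat functions supported in `ℤ_[p]` with integral
`0`, and to its Fourier image `𝓕(D₋)`. -/
def IsPerpDMinus [MeasurableSpace ℚ_[p]] (μ : Measure ℚ_[p]) (ψ φ : ℚ_[p] → ℂ) : Prop :=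
  ∀ g : ℚ_[p] → ℂ, IsSchwartzBruhat g → (∀ x : ℚ_[p], 1 < ‖x‖ → g x = 0) → ∫ x, g x ∂μ = 0 →
    (∫ x, φ x * (starRingEnd ℂ) (g x) ∂μ = 0) ∧
      ∫ x, φ x * (starRingEnd ℂ) (fourierT p μ ψ g x) ∂μ = 0

/-- The ball `p ^ (-k) ℤ_[p]`. -/
def powBall (p : ℕ) [Fact p.Prime] (k : ℤ) : Set ℚ_[p] := Metric.closedBall 0 ((p : ℝ) ^ k)

theorem one_lt_prime_cast : (1 : ℝ) < p := mod_cast (Fact.out : p.Prime).one_lt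

theorem prime_cast_pos : (0 : ℝ) < p := zero_lt_one.trans one_lt_prime_cast

@[simp]
theorem mem_powBall {k : ℤ} {x : ℚ_[p]} : x ∈ powBall p k ↔ ‖x‖ ≤ (p : ℝ) ^ k := by
  simp [powBall]

theorem powBall_zero : powBall p 0 = {x | ‖x‖ ≤ 1} := by
  ext
  simp

theorem powBall_mono : Monotone (powBall p) := fun _ _ h _ hx =>
  mem_powBall.mpr ((mem_powBall.mp hx).trans (zpow_le_zpow_right₀ one_lt_prime_cast.le h))

theorem isClopen_powBall (k : ℤ) : IsClopen (powBall p k) :=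
  IsUltrametricDist.isClopen_closedBall 0 (zpow_pos prime_cast_pos k).ne'

theorem isCompact_powBall (k : ℤ) : IsCompact (powBall p k) :=
  isCompact_closedBall 0 _

theorem measurableSet_powBall [MeasurableSpace ℚ_[p]] [BorelSpace ℚ_[p]] (k : ℤ) :
    MeasurableSet (powBall p k) :=
  (isClopen_powBall k).isClosed.measurableSet

noncomputable def powBallAddSubgroup (p : ℕ) [Fact p.Prime] (k : ℤ) : AddSubgroup ℚ_[p] :=
  IsUltrametricDist.closedBall_openAddSubgroup ℚ_[p] (zpow_pos (prime_cast_pos (p := p)) k)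

theorem coe_powBallAddSubgroup (k : ℤ) : (powBallAddSubgroup p k : Set ℚ_[p]) = powBall p k := by
  ext; rfl

theorem mul_mem_powBall {j k : ℤ} {x y : ℚ_[p]} (hx : x ∈ powBall p j) (hy : y ∈ powBall p k) :
    x * y ∈ powBall p (j + k) := by
  rw [mem_powBall] at *
  rw [norm_mul, zpow_add₀ prime_cast_pos.ne']
  exact mul_le_mul hx hy (norm_nonneg y) (zpow_pos prime_cast_pos j).le

theorem zpow_add_one_le_norm {k : ℤ} {x : ℚ_[p]} (hx : x ∉ powBall p k) :
    (p : ℝ) ^ (k + 1) ≤ ‖x‖ := by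
  rwa [mem_powBall, norm_le_pow_iff_norm_lt_pow_add_one, not_lt] at hx

theorem mem_powBall_sdiff_iff {k : ℤ} {x : ℚ_[p]} :
    x ∈ powBall p k \ powBall p (k - 1) ↔ ‖x‖ = (p : ℝ) ^ k := by
  constructor
  · rintro ⟨hle, hlt⟩
    exact le_antisymm (mem_powBall.mp hle) (by simpa using zpow_add_one_le_norm hlt)
  · intro h
    simp [h, zpow_lt_zpow_right₀ one_lt_prime_cast (sub_one_lt k)]

theorem isOpen_powBall_sdiff (k : ℤ) : IsOpen (powBall p k \ powBall p (k - 1)) :=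
  (isClopen_powBall k).isOpen.sdiff (isClopen_powBall (k - 1)).isClosed

theorem powBall_sdiff_nonempty (k : ℤ) : (powBall p k \ powBall p (k - 1)).Nonempty :=
  ⟨(p : ℚ_[p]) ^ (-k), mem_powBall_sdiff_iff.mpr (by simp)⟩

section HaarMeasure

variable [MeasurableSpace ℚ_[p]] (μ : Measure ℚ_[p]) [μ.IsAddHaarMeasure]

theorem measureReal_powBall_pos (k : ℤ) : 0 < μ.real (powBall p k) :=
  ENNReal.toReal_pos ((isClopen_powBall k).isOpen.measure_pos μ
    ⟨0, by simpa using (zpow_pos prime_cast_pos k).le⟩).ne'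
    (isCompact_powBall k).measure_lt_top.ne

theorem measureReal_powBall_sdiff_pos (k : ℤ) : 0 < μ.real (powBall p k \ powBall p (k - 1)) :=
  ENNReal.toReal_pos ((isOpen_powBall_sdiff k).measure_pos μ (powBall_sdiff_nonempty k)).ne'
    ((measure_mono Set.sdiff_subset).trans_lt (isCompact_powBall k).measure_lt_top).ne

variable [BorelSpace ℚ_[p]]

theorem eq_of_setIntegral_powBall_eq {f g : ℚ_[p] → ℂ}
    (hf : ∀ x y, ‖x‖ = ‖y‖ → f x = f y) (hg : ∀ x y, ‖x‖ = ‖y‖ → g x = g y)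
    (hfi : LocallyIntegrable f μ) (hgi : LocallyIntegrable g μ)
    (h : ∀ k, ∫ x in powBall p k, f x ∂μ = ∫ x in powBall p k, g x ∂μ) {x : ℚ_[p]}
    (hx : x ≠ 0) : f x = g x := by
  set k := -x.valuation
  have hxk : ‖x‖ = (p : ℝ) ^ k := norm_eq_zpow_neg_valuation hx
  have hshell : ∀ F : ℚ_[p] → ℂ, (∀ x y, ‖x‖ = ‖y‖ → F x = F y) → LocallyIntegrable F μ →
      ∫ y in powBall p k, F y ∂μ - ∫ y in powBall p (k - 1), F y ∂μ
        = μ.real (powBall p k \ powBall p (k - 1)) • F x := by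
    intro F hF hFi
    rw [← setIntegral_sdiff (measurableSet_powBall _) (hFi.integrableOn_isCompact
      (isCompact_powBall k)) (powBall_mono (sub_one_lt k).le), ← setIntegral_const]
    refine setIntegral_congr_fun ((measurableSet_powBall _).diff (measurableSet_powBall _))
      fun y hy => hF y x ?_
    rw [mem_powBall_sdiff_iff.mp hy, hxk]
  have := hshell f hf hfi
  rw [h, h, hshell g hg hgi] at this
  exact smul_right_injective ℂ (measureReal_powBall_sdiff_pos μ k).ne' this.symm

theorem integrable_indicator_powBall (k : ℤ) :
    Integrable ((powBall p k).indicator fun _ => (1 : ℂ)) μ :=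
  (integrableOn_const (isCompact_powBall k).measure_lt_top.ne).integrable_indicator
    (measurableSet_powBall k)

theorem setIntegral_powBall_character {ψ : ℚ_[p] → ℂ}
    (hψ : IsUnramifiedCharacter ψ) (x : ℚ_[p]) (k : ℤ) :
    ∫ y in powBall p k, ψ (-(x * y)) ∂μ
      = μ.real (powBall p k) * (powBall p (-k)).indicator (fun _ => 1) x := by
  by_cases hx : x ∈ powBall p (-k)
  · have hψ_one : ∀ y ∈ powBall p k, ψ (-(x * y)) = 1 := fun y hy =>
      hψ.eq_one_of_norm_le_one _ (by simpa using mul_mem_powBall hx hy)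
    rw [setIntegral_congr_fun (measurableSet_powBall k) hψ_one, setIntegral_const,
      Set.indicator_of_mem hx]
    simp
  obtain ⟨x₀, hx₀, hψx₀⟩ := hψ.exists_ne_one
  have hx0 : x ≠ 0 := by
    rintro rfl
    exact hx (by simpa using (zpow_pos prime_cast_pos (-k)).le)
  have hy₀ : -(x₀ / x) ∈ powBall p k := by
    rw [mem_powBall, norm_neg, norm_div, hx₀, div_le_iff₀ (norm_pos_iff.mpr hx0)]
    calc (p : ℝ) = (p : ℝ) ^ k * (p : ℝ) ^ (-k + 1) := by
          rw [← zpow_add₀ prime_cast_pos.ne']; simp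
      _ ≤ (p : ℝ) ^ k * ‖x‖ := by gcongr; exact zpow_add_one_le_norm hx
  rw [Set.indicator_of_notMem hx, mul_zero, ← coe_powBallAddSubgroup]
  refine setIntegral_addSubgroup_eq_zero (χ := fun y => ψ (-(x * y)))
    (fun y z => by rw [← hψ.map_add_eq_mul]; ring_nf) ?_ hy₀ ?_
  · rw [coe_powBallAddSubgroup]
    exact measurableSet_powBall k
  · simpa [mul_div_cancel₀ _ hx0] using hψx₀

theorem fourierT_indicator_powBall_sub {ψ : ℚ_[p] → ℂ} (hψ_cont : Continuous ψ)
    (hψ : IsUnramifiedCharacter ψ) (a b : ℂ) (j k : ℤ) (x : ℚ_[p]) :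
    fourierT p μ ψ (fun y => a * (powBall p j).indicator (fun _ => 1) y
        - b * (powBall p k).indicator (fun _ => 1) y) x
      = a * μ.real (powBall p j) * (powBall p (-j)).indicator (fun _ => 1) x
        - b * μ.real (powBall p k) * (powBall p (-k)).indicator (fun _ => 1) x := by
  have hint : ∀ i, Integrable ((powBall p i).indicator fun y => ψ (-(x * y))) μ := fun i =>
    ((Continuous.locallyIntegrable (by fun_prop)).integrableOn_isCompact
      (isCompact_powBall i)).integrable_indicator (measurableSet_powBall i)
  have hpt : ∀ y, (a * (powBall p j).indicator (fun _ => 1) y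
      - b * (powBall p k).indicator (fun _ => 1) y) * ψ (-(x * y))
      = a * (powBall p j).indicator (fun y => ψ (-(x * y))) y
        - b * (powBall p k).indicator (fun y => ψ (-(x * y))) y := by
    intro y
    by_cases hj : y ∈ powBall p j <;> by_cases hk : y ∈ powBall p k <;> simp [hj, hk, sub_mul]
  simp only [fourierT, hpt]
  rw [integral_sub ((hint j).const_mul a) ((hint k).const_mul b), integral_const_mul,
    integral_const_mul, integral_indicator (measurableSet_powBall j),
    integral_indicator (measurableSet_powBall k),
    setIntegral_powBall_character μ hψ,
    setIntegral_powBall_character μ hψ]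
  ring

end HaarMeasure

theorem isSchwartzBruhat_indicator_powBall_sub (a b : ℂ) (j k : ℤ) :
    IsSchwartzBruhat fun y : ℚ_[p] => a * (powBall p j).indicator (fun _ => 1) y
      - b * (powBall p k).indicator (fun _ => 1) y := by
  have hlc : ∀ i, IsLocallyConstant ((powBall p i).indicator fun _ => (1 : ℂ)) := fun i =>
    ((LocallyConstant.const ℚ_[p] (1 : ℂ)).indicator (isClopen_powBall i)).isLocallyConstant
  have hcs : ∀ i, HasCompactSupport ((powBall p i).indicator fun _ => (1 : ℂ)) := fun i =>
    HasCompactSupport.intro (isCompact_powBall i) fun _ hy => Set.indicator_of_notMem hy _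
  exact ⟨((IsLocallyConstant.const a).mul (hlc j)).sub ((IsLocallyConstant.const b).mul (hlc k)),
    (hcs j).mul_left.sub (hcs k).mul_left⟩

section Orthogonality

variable [MeasurableSpace ℚ_[p]] [BorelSpace ℚ_[p]] {μ : Measure ℚ_[p]} [μ.IsAddHaarMeasure]
  {ψ : ℚ_[p] → ℂ} {φ : ℚ_[p] → ℂ}

/-- With `B = powBall p`, the test function is `1_{B k} - (μ (B k) / μ (B 0)) • 1_{B 0}`, whose
Fourier transform is `μ (B k) • (1_{B (-k)} - 1_{B 0})`. -/
theorem setIntegral_powBall_of_perp (hψ_cont : Continuous ψ)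
    (hψ : IsUnramifiedCharacter ψ) (hφ : LocallyIntegrable φ μ)
    (hperp : IsPerpDMinus μ ψ φ) {k : ℤ} (hk : k ≤ 0) :
    (∫ x in powBall p k, φ x ∂μ) * μ.real (powBall p 0)
        = μ.real (powBall p k) * ∫ x in powBall p 0, φ x ∂μ ∧
      ∫ x in powBall p (-k), φ x ∂μ = ∫ x in powBall p 0, φ x ∂μ := by
  set m := μ.real (powBall p k)
  set m₀ := μ.real (powBall p 0)
  have hm : (m : ℂ) ≠ 0 := mod_cast (measureReal_powBall_pos μ k).ne'
  have hm₀ : (m₀ : ℂ) ≠ 0 := mod_cast (measureReal_powBall_pos μ 0).ne'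
  set g : ℚ_[p] → ℂ := fun y => 1 * (powBall p k).indicator (fun _ => 1) y
    - (m / m₀ : ℂ) * (powBall p 0).indicator (fun _ => 1) y
  have hg_supp : ∀ x : ℚ_[p], 1 < ‖x‖ → g x = 0 := by
    intro x hx
    have h0 : x ∉ powBall p 0 := by simpa using hx
    have hk' : x ∉ powBall p k := fun h => h0 (powBall_mono hk h)
    simp [g, h0, hk']
  have hg_int : ∫ x, g x ∂μ = 0 := by
    rw [integral_sub ((integrable_indicator_powBall μ k).const_mul _)
        ((integrable_indicator_powBall μ 0).const_mul _), integral_const_mul, integral_const_mul,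
      integral_indicator_const _ (measurableSet_powBall k),
      integral_indicator_const _ (measurableSet_powBall 0)]
    simp [m, m₀, hm₀]
  have hFg : fourierT p μ ψ g = fun x => (m : ℂ) * (powBall p (-k)).indicator (fun _ => 1) x
      - (m : ℂ) * (powBall p 0).indicator (fun _ => 1) x := by
    funext x
    rw [fourierT_indicator_powBall_sub μ hψ_cont hψ, neg_zero]
    field_simp
    ring
  obtain ⟨h₁, h₂⟩ := hperp g (isSchwartzBruhat_indicator_powBall_sub _ _ k 0) hg_supp hg_int
  have hB : ∀ i, IntegrableOn φ (powBall p i) μ := fun i =>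
    hφ.integrableOn_isCompact (isCompact_powBall i)
  rw [integral_mul_conj_indicator_sub (measurableSet_powBall _) (measurableSet_powBall _)
    (hB _) (hB _)] at h₁
  rw [hFg, integral_mul_conj_indicator_sub (measurableSet_powBall _) (measurableSet_powBall _)
    (hB _) (hB _)] at h₂
  simp only [map_one, map_div₀, conj_ofReal, one_mul] at h₁ h₂
  constructor
  · field_simp at h₁
    linear_combination h₁
  · rw [← mul_sub, mul_eq_zero, sub_eq_zero] at h₂
    exact h₂.resolve_left hm

theorem exists_setIntegral_powBall_eq_of_perp (hψ_cont : Continuous ψ)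
    (hψ : IsUnramifiedCharacter ψ) (hφ : LocallyIntegrable φ μ)
    (hperp : IsPerpDMinus μ ψ φ) :
    ∃ c : ℂ, ∀ k, ∫ x in powBall p k, φ x ∂μ
      = ∫ x in powBall p k, c * (powBall p 0).indicator (fun _ => 1) x ∂μ := by
  have hm₀ : (μ.real (powBall p 0) : ℂ) ≠ 0 := mod_cast (measureReal_powBall_pos μ 0).ne'
  refine ⟨(∫ x in powBall p 0, φ x ∂μ) / μ.real (powBall p 0), fun k => ?_⟩
  rw [integral_const_mul, integral_indicator_const _ (measurableSet_powBall 0),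
    measureReal_restrict_apply (measurableSet_powBall 0)]
  rcases le_total k 0 with hk | hk
  · have h := (setIntegral_powBall_of_perp hψ_cont hψ hφ hperp hk).1
    rw [Set.inter_eq_right.mpr (powBall_mono hk)]
    field_simp
    simpa [mul_comm] using h
  · have h := (setIntegral_powBall_of_perp hψ_cont hψ hφ hperp (neg_nonpos.mpr hk)).2
    rw [neg_neg] at h
    rw [Set.inter_eq_left.mpr (powBall_mono hk), h, real_smul, mul_one]
    field_simp

end Orthogonality

end Padic

theorem interacting_trivial_component_general (p : ℕ) [Fact p.Prime]
    [MeasurableSpace ℚ_[p]] [BorelSpace ℚ_[p]]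
    (μ : Measure ℚ_[p]) [μ.IsAddHaarMeasure]
    (ψ : ℚ_[p] → ℂ) (hψ_cont : Continuous ψ)
    (hψ_add : ∀ x y : ℚ_[p], ψ (x + y) = ψ x * ψ y)
    (hψ_triv : ∀ x : ℚ_[p], ‖x‖ ≤ 1 → ψ x = 1)
    (hψ_nontriv : ∃ x₀ : ℚ_[p], ‖x₀‖ = (p : ℝ) ∧ ψ x₀ ≠ 1)
    (φ : ℚ_[p] → ℂ) (hφL2 : MemLp φ 2 μ)
    (hφinv : ∀ (u x : ℚ_[p]), ‖u‖ = 1 → φ (u * x) = φ x)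
    (hperp : ∀ g : ℚ_[p] → ℂ, IsSchwartzBruhat g →
      (∀ x : ℚ_[p], 1 < ‖x‖ → g x = 0) → (∫ x, g x ∂μ = 0) →
      (∫ x, φ x * (starRingEnd ℂ) (g x) ∂μ = 0) ∧
      (∫ x, φ x * (starRingEnd ℂ) (fourierT p μ ψ g x) ∂μ = 0)) :
    ∃ c : ℂ, ∀ᵐ x ∂μ,
      φ x = c * Set.indicator {y : ℚ_[p] | ‖y‖ ≤ 1} (fun _ => (1 : ℂ)) x := by
  have hψ : Padic.IsUnramifiedCharacter ψ := ⟨hψ_add, hψ_triv, hψ_nontriv⟩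
  have hφ : LocallyIntegrable φ μ := hφL2.locallyIntegrable one_le_two
  obtain ⟨c, hc⟩ := Padic.exists_setIntegral_powBall_eq_of_perp hψ_cont hψ hφ hperp
  set ω := (Padic.powBall p 0).indicator fun _ => (1 : ℂ)
  have hω_radial : ∀ x y : ℚ_[p], ‖x‖ = ‖y‖ → c * ω x = c * ω y := by
    intro x y h
    simp only [ω, Set.indicator, Padic.mem_powBall, h]
  refine ⟨c, ?_⟩
  rw [← Padic.powBall_zero]
  filter_upwards [Measure.ae_ne μ 0] with x hx
  exact Padic.eq_of_setIntegral_powBall_eq μ (fun _ _ => apply_eq_of_norm_eq hφinv) hω_radial hφ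
    ((Padic.integrable_indicator_powBall μ 0).const_mul c).locallyIntegrable hc hx

/-- Theorem V, trivial-character component: a unit-invariant square-integrable
function orthogonal to `D₋` and to `𝓕(D₋)` is a.e. a multiple of Tate's function
`ω = 1_{ℤ_p}`. -/
theorem interacting_trivial_component (p : ℕ) [Fact p.Prime]
    [MeasurableSpace ℚ_[p]] [BorelSpace ℚ_[p]]
    (μ : Measure ℚ_[p]) [μ.IsAddHaarMeasure]
    (hμ : μ {x : ℚ_[p] | ‖x‖ ≤ 1} = 1)
    (ψ : ℚ_[p] → ℂ) (hψ_cont : Continuous ψ)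
    (hψ_add : ∀ x y : ℚ_[p], ψ (x + y) = ψ x * ψ y)
    (hψ_norm : ∀ x : ℚ_[p], ‖ψ x‖ = 1)
    (hψ_triv : ∀ x : ℚ_[p], ‖x‖ ≤ 1 → ψ x = 1)
    (hψ_nontriv : ∃ x₀ : ℚ_[p], ‖x₀‖ = (p : ℝ) ∧ ψ x₀ ≠ 1)
    (φ : ℚ_[p] → ℂ) (hφmeas : Measurable φ) (hφL2 : MemLp φ 2 μ)
    (hφinv : ∀ (u x : ℚ_[p]), ‖u‖ = 1 → φ (u * x) = φ x)
    (hperp : ∀ g : ℚ_[p] → ℂ, IsSchwartzBruhat g →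
      (∀ x : ℚ_[p], 1 < ‖x‖ → g x = 0) → (∫ x, g x ∂μ = 0) →
      (∫ x, φ x * (starRingEnd ℂ) (g x) ∂μ = 0) ∧
      (∫ x, φ x * (starRingEnd ℂ) (fourierT p μ ψ g x) ∂μ = 0)) :
    ∃ c : ℂ, ∀ᵐ x ∂μ,
      φ x = c * Set.indicator {y : ℚ_[p] | ‖y‖ ≤ 1} (fun _ => (1 : ℂ)) x :=
  interacting_trivial_component_general p μ ψ hψ_cont hψ_add hψ_triv hψ_nontriv φ hφL2 hφinv hperp
end

section
/- (Theorem XI made explicit on ball indicator functions, δ = 0) Let n ≥ 0 be an integer. Then: (i) for every integer j with −n ≤ j ≤ n, Q_n(1_{B_j}) = 1_{B_j} pointwise; (ii) for every integer j > n, Q_n(1_{B_j}) = 1_{B_n} pointwise; (iii) for every integer j < −n, Q_n(1_{B_j}) = p^{n+j} · 1_{B_{−n}} pointwise. -/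
open MeasureTheory Complex

/-- The indicator function of the ball `B_j = {x : ‖x‖ ≤ p^j}`. -/
noncomputable def ballInd (p : ℕ) [Fact p.Prime] (j : ℤ) : ℚ_[p] → ℂ :=
  Set.indicator {x : ℚ_[p] | ‖x‖ ≤ (p : ℝ) ^ j} (fun _ => (1 : ℂ))

/-- The operator `Q_n = P̃_n P_n` where `P_n` is multiplication by `1_{B_n}`
and `P̃_n = 𝓕 P_n 𝓕⁻¹`: `Q_nφ = 𝓕(1_{B_n} · 𝓕⁻¹(1_{B_n} · φ))`. -/
noncomputable def Qop (p : ℕ) [Fact p.Prime] [MeasurableSpace ℚ_[p]]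
    (μ : Measure ℚ_[p]) (ψ : ℚ_[p] → ℂ) (n : ℕ) (φ : ℚ_[p] → ℂ) : ℚ_[p] → ℂ :=
  fourierT p μ ψ (fun x => ballInd p n x *
    fourierInvT p μ ψ (fun y => ballInd p n y * φ y) x)

/-!
The whole computation rests on `𝓕⁻¹ 1_{B_m} = p^m · 1_{B_{-m}}` (and the same for `𝓕`). If
`‖x‖ ≤ p^{-m}` then `y ↦ ψ(x y)` is trivial on `B_m`, so the integral is `μ(B_m) = p^m`; the
normalisation `μ(B_m) = p^m` holds because `B_{j+1}` is the disjoint union of the `p` translates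
`i p^{-(j+1)} + B_j`, `0 ≤ i < p`. If `‖x‖ > p^{-m}` then `x⁻¹ x₀ ∈ B_m`, and translating by it
multiplies the integrand by `ψ(x₀) ≠ 1`, so the integral vanishes. As
`1_{B_a} 1_{B_b} = 1_{B_{min a b}}`, this gives `Q_n 1_{B_j} = p^{m + k} 1_{B_{-k}}` with
`m = min n j` and `k = min n (-m)`, from which the three cases are read off.
-/

section AddGroup

variable {G ι : Type*} [AddGroup G] [MeasurableSpace G] [MeasurableAdd G]

lemma measure_biUnion_translates (μ : Measure G) [μ.IsAddRightInvariant] {s : Set G}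
    (hs : MeasurableSet s) (I : Finset ι) (a : ι → G)
    (hd : (I : Set ι).PairwiseDisjoint fun i => (· + a i) ⁻¹' s) :
    μ (⋃ i ∈ I, (· + a i) ⁻¹' s) = I.card * μ s := by
  rw [measure_biUnion_finset hd fun i _ => hs.preimage (measurable_add_const _)]
  simp only [measure_preimage_add_right, Finset.sum_const, nsmul_eq_mul]

lemma integral_eq_zero_of_add_right_eq_mul {μ : Measure G} [μ.IsAddRightInvariant] {f : G → ℂ}
    {g : G} {c : ℂ} (hc : c ≠ 1) (hf : ∀ x, f (x + g) = f x * c) : ∫ x, f x ∂μ = 0 := by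
  have h := integral_add_right_eq_self (μ := μ) f g
  simp_rw [hf, integral_mul_const] at h
  by_contra hI
  exact hc ((mul_eq_left₀ hI).1 h)

end AddGroup

namespace Padic

variable {p : ℕ} [Fact p.Prime]

lemma exists_norm_sub_natCast_lt_one {z : ℚ_[p]} (hz : ‖z‖ ≤ 1) :
    ∃ i < p, ‖z - i‖ < 1 := by
  obtain ⟨i, hip, hi⟩ := PadicInt.exists_mem_range (⟨z, hz⟩ : ℤ_[p])
  exact ⟨i, hip, PadicInt.mem_nonunits.1 hi⟩

lemma natCast_eq_of_norm_sub_lt_one {z : ℚ_[p]} {i i' : ℕ} (hi : i < p) (hi' : i' < p)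
    (h : ‖z - i‖ < 1) (h' : ‖z - i'‖ < 1) : i = i' := by
  rw [← dist_eq_norm] at h h'
  have hlt : ‖(((i' : ℤ) - i : ℤ) : ℚ_[p])‖ < 1 := by
    push_cast
    rw [← dist_eq_norm]
    exact (IsUltrametricDist.dist_triangle_max _ z _).trans_lt
      (max_lt (by rwa [dist_comm]) h)
  have := Int.eq_zero_of_abs_lt_dvd (norm_intCast_lt_one_iff.1 hlt) (by rw [abs_lt]; omega)
  omega

lemma norm_le_zpow_iff_norm_mul_zpow_le (x : ℚ_[p]) (j k : ℤ) :
    ‖x‖ ≤ (p : ℝ) ^ j ↔ ‖x * (p : ℚ_[p]) ^ k‖ ≤ (p : ℝ) ^ (j - k) := by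
  have hp : (0 : ℝ) < p := Nat.cast_pos.2 (Fact.out : p.Prime).pos
  rw [norm_mul, norm_p_zpow, zpow_sub₀ hp.ne', zpow_neg, ← div_eq_mul_inv,
    div_le_div_iff_of_pos_right (zpow_pos hp k)]

lemma norm_sub_natCast_mul_zpow_le_iff (x : ℚ_[p]) (i : ℕ) (j : ℤ) :
    ‖x - i * (p : ℚ_[p]) ^ (-(j + 1))‖ ≤ (p : ℝ) ^ j ↔ ‖x * (p : ℚ_[p]) ^ (j + 1) - i‖ < 1 := by
  have hp : (p : ℚ_[p]) ≠ 0 := Nat.cast_ne_zero.2 (Fact.out : p.Prime).ne_zero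
  rw [norm_le_zpow_iff_norm_mul_zpow_le _ j (j + 1), sub_mul, mul_assoc, ← zpow_add₀ hp,
    neg_add_cancel, zpow_zero, mul_one, show j - (j + 1) = -1 by ring,
    norm_le_pow_iff_norm_lt_pow_add_one, neg_add_cancel, zpow_zero]

lemma ball_succ_eq_biUnion (j : ℤ) :
    {x : ℚ_[p] | ‖x‖ ≤ (p : ℝ) ^ (j + 1)} = ⋃ i ∈ Finset.range p,
      (· + -(i * (p : ℚ_[p]) ^ (-(j + 1)))) ⁻¹' {x | ‖x‖ ≤ (p : ℝ) ^ j} := by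
  ext x
  simp only [Set.mem_ofPred_eq, Set.mem_iUnion, Set.mem_preimage, Finset.mem_range, exists_prop,
    ← sub_eq_add_neg, norm_sub_natCast_mul_zpow_le_iff]
  rw [norm_le_zpow_iff_norm_mul_zpow_le _ _ (j + 1), sub_self, zpow_zero]
  refine ⟨exists_norm_sub_natCast_lt_one, fun ⟨i, _, hi⟩ => ?_⟩
  calc ‖x * (p : ℚ_[p]) ^ (j + 1)‖ = ‖(x * (p : ℚ_[p]) ^ (j + 1) - i) + i‖ := by rw [sub_add_cancel]
    _ ≤ max ‖x * (p : ℚ_[p]) ^ (j + 1) - i‖ ‖(i : ℚ_[p])‖ := nonarchimedean _ _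
    _ ≤ 1 := max_le hi.le (by simpa using norm_int_le_one (p := p) i)

lemma pairwiseDisjoint_ball_translates (j : ℤ) :
    (Finset.range p : Set ℕ).PairwiseDisjoint fun i =>
      (· + -(i * (p : ℚ_[p]) ^ (-(j + 1)))) ⁻¹' {x | ‖x‖ ≤ (p : ℝ) ^ j} := by
  intro i hi i' hi' hne
  simp only [Finset.coe_range, Set.mem_Iio] at hi hi'
  rw [Function.onFun, Set.disjoint_left]
  intro x hx hx'
  simp only [Set.mem_preimage, Set.mem_ofPred_eq, ← sub_eq_add_neg,
    norm_sub_natCast_mul_zpow_le_iff] at hx hx'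
  exact hne (natCast_eq_of_norm_sub_lt_one hi hi' hx hx')

lemma measurableSet_norm_le [MeasurableSpace ℚ_[p]] [OpensMeasurableSpace ℚ_[p]] (r : ℝ) :
    MeasurableSet {x : ℚ_[p] | ‖x‖ ≤ r} :=
  measurableSet_le continuous_norm.measurable measurable_const

variable [MeasurableSpace ℚ_[p]] [BorelSpace ℚ_[p]] (μ : Measure ℚ_[p])
  [μ.IsAddRightInvariant]

lemma measure_ball_succ (j : ℤ) :
    μ {x : ℚ_[p] | ‖x‖ ≤ (p : ℝ) ^ (j + 1)} = p * μ {x : ℚ_[p] | ‖x‖ ≤ (p : ℝ) ^ j} := by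
  rw [ball_succ_eq_biUnion, measure_biUnion_translates μ (measurableSet_norm_le _) _ _
    (pairwiseDisjoint_ball_translates j), Finset.card_range]

lemma measure_ball (hμ : μ {x : ℚ_[p] | ‖x‖ ≤ 1} = 1) (j : ℤ) :
    μ {x : ℚ_[p] | ‖x‖ ≤ (p : ℝ) ^ j} = ENNReal.ofReal ((p : ℝ) ^ j) := by
  have hp : (0 : ℝ) < p := Nat.cast_pos.2 (Fact.out : p.Prime).pos
  have hstep (k : ℤ) : ENNReal.ofReal ((p : ℝ) ^ (k + 1)) = p * ENNReal.ofReal ((p : ℝ) ^ k) := by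
    rw [zpow_add_one₀ hp.ne', mul_comm, ENNReal.ofReal_mul hp.le, ENNReal.ofReal_natCast]
  induction j using Int.induction_on with
  | zero => simpa using hμ
  | succ k ih => rw [measure_ball_succ, ih, hstep]
  | pred k ih =>
    have h := measure_ball_succ μ (-(k : ℤ) - 1)
    have h' := hstep (-(k : ℤ) - 1)
    rw [sub_add_cancel, ih] at h
    rw [sub_add_cancel] at h'
    exact (ENNReal.mul_right_inj (by simp [(Fact.out : p.Prime).ne_zero])
      (ENNReal.natCast_ne_top p)).1 (h.symm.trans h')

end Padic

section BallIndicator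

variable {p : ℕ} [Fact p.Prime]

lemma ballInd_apply (j : ℤ) (x : ℚ_[p]) :
    ballInd p j x = if ‖x‖ ≤ (p : ℝ) ^ j then 1 else 0 :=
  Set.indicator_apply _ _ _

lemma ballInd_mul_ballInd (a b : ℤ) (x : ℚ_[p]) :
    ballInd p a x * ballInd p b x = ballInd p (min a b) x := by
  have hmono := zpow_right_mono₀ (Nat.one_le_cast.2 (Fact.out : p.Prime).one_lt.le : (1 : ℝ) ≤ p)
  simp only [ballInd_apply, hmono.map_min, le_min_iff]
  split_ifs <;> simp_all

lemma ballInd_neg (j : ℤ) (x : ℚ_[p]) : ballInd p j (-x) = ballInd p j x := by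
  simp only [ballInd_apply, norm_neg]

lemma ballInd_add_of_norm_le {j : ℤ} {g : ℚ_[p]} (hg : ‖g‖ ≤ (p : ℝ) ^ j) (x : ℚ_[p]) :
    ballInd p j (x + g) = ballInd p j x := by
  have hmem : ‖x + g‖ ≤ (p : ℝ) ^ j ↔ ‖x‖ ≤ (p : ℝ) ^ j :=
    ⟨fun h => by
      simpa using (Padic.nonarchimedean (x + g) (-g)).trans (max_le h (by rwa [norm_neg])),
      fun h => (Padic.nonarchimedean x g).trans (max_le h hg)⟩
  simp only [ballInd_apply, hmem]

end BallIndicator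

section Fourier

variable {p : ℕ} [Fact p.Prime] [MeasurableSpace ℚ_[p]] (μ : Measure ℚ_[p]) (ψ : ℚ_[p] → ℂ)

lemma fourierT_apply_eq_fourierInvT_neg (φ : ℚ_[p] → ℂ) (x : ℚ_[p]) :
    fourierT p μ ψ φ x = fourierInvT p μ ψ φ (-x) := by
  simp only [fourierT, fourierInvT, neg_mul]

lemma fourierT_const_mul (c : ℂ) (φ : ℚ_[p] → ℂ) (x : ℚ_[p]) :
    fourierT p μ ψ (fun y => c * φ y) x = c * fourierT p μ ψ φ x := by
  simp only [fourierT, mul_assoc, integral_const_mul]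

variable [BorelSpace ℚ_[p]] [μ.IsAddRightInvariant]

lemma integral_ballInd (hμ : μ {x : ℚ_[p] | ‖x‖ ≤ 1} = 1) (m : ℤ) :
    ∫ y, ballInd p m y ∂μ = (p : ℂ) ^ m := by
  rw [ballInd, integral_indicator_const _ (Padic.measurableSet_norm_le _), measureReal_def,
    Padic.measure_ball μ hμ, ENNReal.toReal_ofReal (zpow_nonneg (Nat.cast_nonneg p) m)]
  simp

lemma fourierInvT_ballInd (hμ : μ {x : ℚ_[p] | ‖x‖ ≤ 1} = 1)
    (hψ_add : ∀ x y : ℚ_[p], ψ (x + y) = ψ x * ψ y)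
    (hψ_triv : ∀ x : ℚ_[p], ‖x‖ ≤ 1 → ψ x = 1)
    (hψ_nontriv : ∃ x₀ : ℚ_[p], ‖x₀‖ = (p : ℝ) ∧ ψ x₀ ≠ 1) (m : ℤ) (x : ℚ_[p]) :
    fourierInvT p μ ψ (ballInd p m) x = (p : ℂ) ^ m * ballInd p (-m) x := by
  have hp : (0 : ℝ) < p := Nat.cast_pos.2 (Fact.out : p.Prime).pos
  by_cases hx : ‖x‖ ≤ (p : ℝ) ^ (-m)
  · have hψ_ball (y : ℚ_[p]) : ballInd p m y * ψ (x * y) = ballInd p m y := by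
      by_cases hy : ‖y‖ ≤ (p : ℝ) ^ m
      · have hxy : ‖x * y‖ ≤ 1 := by
          rw [norm_mul, ← zpow_neg_mul_zpow_self m hp.ne']
          exact mul_le_mul hx hy (norm_nonneg y) (by positivity)
        rw [hψ_triv _ hxy, mul_one]
      · simp [ballInd_apply, hy]
    simp only [fourierInvT, hψ_ball, integral_ballInd μ hμ]
    rw [ballInd_apply, if_pos hx, mul_one]
  · obtain ⟨x₀, hx₀_norm, hx₀⟩ := hψ_nontriv
    have hx0 : x ≠ 0 := by
      rintro rfl
      exact hx (by rw [norm_zero]; positivity)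
    have hx_ge : (p : ℝ) ^ (-m + 1) ≤ ‖x‖ :=
      not_lt.1 ((Padic.norm_le_pow_iff_norm_lt_pow_add_one x (-m)).not.1 hx)
    have hg : ‖x⁻¹ * x₀‖ ≤ (p : ℝ) ^ m := by
      rw [norm_mul, norm_inv, hx₀_norm]
      calc ‖x‖⁻¹ * p ≤ ((p : ℝ) ^ (-m + 1))⁻¹ * p := by
            gcongr
        _ = (p : ℝ) ^ m := by
            rw [← zpow_neg, neg_add, neg_neg, zpow_add₀ hp.ne', zpow_neg_one,
              inv_mul_cancel_right₀ hp.ne']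
    have hshift (y : ℚ_[p]) : ballInd p m (y + x⁻¹ * x₀) * ψ (x * (y + x⁻¹ * x₀))
        = ballInd p m y * ψ (x * y) * ψ x₀ := by
      rw [ballInd_add_of_norm_le hg, mul_add, mul_inv_cancel_left₀ hx0, hψ_add, mul_assoc]
    rw [fourierInvT, integral_eq_zero_of_add_right_eq_mul hx₀ hshift, ballInd_apply, if_neg hx,
      mul_zero]

lemma fourierT_ballInd (hμ : μ {x : ℚ_[p] | ‖x‖ ≤ 1} = 1)
    (hψ_add : ∀ x y : ℚ_[p], ψ (x + y) = ψ x * ψ y)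
    (hψ_triv : ∀ x : ℚ_[p], ‖x‖ ≤ 1 → ψ x = 1)
    (hψ_nontriv : ∃ x₀ : ℚ_[p], ‖x₀‖ = (p : ℝ) ∧ ψ x₀ ≠ 1) (m : ℤ) (x : ℚ_[p]) :
    fourierT p μ ψ (ballInd p m) x = (p : ℂ) ^ m * ballInd p (-m) x := by
  rw [fourierT_apply_eq_fourierInvT_neg,
    fourierInvT_ballInd μ ψ hμ hψ_add hψ_triv hψ_nontriv, ballInd_neg]

lemma Qop_ballInd (hμ : μ {x : ℚ_[p] | ‖x‖ ≤ 1} = 1)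
    (hψ_add : ∀ x y : ℚ_[p], ψ (x + y) = ψ x * ψ y)
    (hψ_triv : ∀ x : ℚ_[p], ‖x‖ ≤ 1 → ψ x = 1)
    (hψ_nontriv : ∃ x₀ : ℚ_[p], ‖x₀‖ = (p : ℝ) ∧ ψ x₀ ≠ 1) (n : ℕ) (j : ℤ) (x : ℚ_[p]) :
    Qop p μ ψ n (ballInd p j) x = (p : ℂ) ^ (min (n : ℤ) j + min (n : ℤ) (-min (n : ℤ) j)) *
      ballInd p (-min (n : ℤ) (-min (n : ℤ) j)) x := by
  have hp : (p : ℂ) ≠ 0 := Nat.cast_ne_zero.2 (Fact.out : p.Prime).ne_zero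
  have hinner (y : ℚ_[p]) :
      ballInd p n y * fourierInvT p μ ψ (fun z => ballInd p n z * ballInd p j z) y =
        (p : ℂ) ^ min (n : ℤ) j * ballInd p (min (n : ℤ) (-min (n : ℤ) j)) y := by
    simp_rw [ballInd_mul_ballInd, fourierInvT_ballInd μ ψ hμ hψ_add hψ_triv hψ_nontriv]
    rw [mul_left_comm, ballInd_mul_ballInd]
  rw [Qop]
  simp_rw [hinner]
  rw [fourierT_const_mul, fourierT_ballInd μ ψ hμ hψ_add hψ_triv hψ_nontriv, ← mul_assoc,
    ← zpow_add₀ hp]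

end Fourier

theorem Qop_on_ball_indicators_general (p : ℕ) [Fact p.Prime]
    [MeasurableSpace ℚ_[p]] [BorelSpace ℚ_[p]]
    (μ : Measure ℚ_[p]) [μ.IsAddHaarMeasure]
    (hμ : μ {x : ℚ_[p] | ‖x‖ ≤ 1} = 1)
    (ψ : ℚ_[p] → ℂ)
    (hψ_add : ∀ x y : ℚ_[p], ψ (x + y) = ψ x * ψ y)
    (hψ_triv : ∀ x : ℚ_[p], ‖x‖ ≤ 1 → ψ x = 1)
    (hψ_nontriv : ∃ x₀ : ℚ_[p], ‖x₀‖ = (p : ℝ) ∧ ψ x₀ ≠ 1)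
    (n : ℕ) :
    (∀ j : ℤ, -(n : ℤ) ≤ j → j ≤ (n : ℤ) →
      ∀ x : ℚ_[p], Qop p μ ψ n (ballInd p j) x = ballInd p j x) ∧
    (∀ j : ℤ, (n : ℤ) < j →
      ∀ x : ℚ_[p], Qop p μ ψ n (ballInd p j) x = ballInd p (n : ℤ) x) ∧
    (∀ j : ℤ, j < -(n : ℤ) →
      ∀ x : ℚ_[p], Qop p μ ψ n (ballInd p j) x
        = (p : ℂ) ^ ((n : ℤ) + j) * ballInd p (-(n : ℤ)) x) := by
  have hQ := Qop_ballInd μ ψ hμ hψ_add hψ_triv hψ_nontriv n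
  refine ⟨fun j hlo hhi x => ?_, fun j hhi x => ?_, fun j hlo x => ?_⟩ <;> rw [hQ]
  · rw [min_eq_right hhi, min_eq_right (by omega : -j ≤ (n : ℤ)), neg_neg, add_neg_cancel,
      zpow_zero, one_mul]
  · rw [min_eq_left hhi.le, min_eq_right (by omega : -(n : ℤ) ≤ n), neg_neg, add_neg_cancel,
      zpow_zero, one_mul]
  · rw [min_eq_right (by omega : j ≤ (n : ℤ)), min_eq_left (by omega : (n : ℤ) ≤ -j), add_comm]

/-- Theorem XI on ball indicators (`δ = 0`): `Q_n` fixes `1_{B_j}` for `|j| ≤ n`,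
sends `1_{B_j}` to `1_{B_n}` for `j > n`, and to `p^{n+j}·1_{B_{−n}}` for `j < −n`. -/
theorem Qop_on_ball_indicators (p : ℕ) [Fact p.Prime]
    [MeasurableSpace ℚ_[p]] [BorelSpace ℚ_[p]]
    (μ : Measure ℚ_[p]) [μ.IsAddHaarMeasure]
    (hμ : μ {x : ℚ_[p] | ‖x‖ ≤ 1} = 1)
    (ψ : ℚ_[p] → ℂ) (hψ_cont : Continuous ψ)
    (hψ_add : ∀ x y : ℚ_[p], ψ (x + y) = ψ x * ψ y)
    (hψ_norm : ∀ x : ℚ_[p], ‖ψ x‖ = 1)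
    (hψ_triv : ∀ x : ℚ_[p], ‖x‖ ≤ 1 → ψ x = 1)
    (hψ_nontriv : ∃ x₀ : ℚ_[p], ‖x₀‖ = (p : ℝ) ∧ ψ x₀ ≠ 1)
    (n : ℕ) :
    (∀ j : ℤ, -(n : ℤ) ≤ j → j ≤ (n : ℤ) →
      ∀ x : ℚ_[p], Qop p μ ψ n (ballInd p j) x = ballInd p j x) ∧
    (∀ j : ℤ, (n : ℤ) < j →
      ∀ x : ℚ_[p], Qop p μ ψ n (ballInd p j) x = ballInd p (n : ℤ) x) ∧
    (∀ j : ℤ, j < -(n : ℤ) →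
      ∀ x : ℚ_[p], Qop p μ ψ n (ballInd p j) x
        = (p : ℂ) ^ ((n : ℤ) + j) * ballInd p (-(n : ℤ)) x) :=
  Qop_on_ball_indicators_general p μ hμ ψ hψ_add hψ_triv hψ_nontriv n
end

section
/- (Theorem XI, ramified components with large conductor are killed by Q_n) Let n ≥ 0 and e ≥ 1 be integers with 2·n < e, and let χ be a multiplicative character of conductor e. If φ : ℚ_p → ℂ is a Schwartz–Bruhat function satisfying φ(u·x) = χ(u)·φ(x) for every x ∈ ℚ_p and every unit u (‖u‖ = 1), then Q_nφ = 0 pointwise. -/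
open MeasureTheory Complex

/-! Put `f = 1_{B_n} · φ` and `g = 𝓕⁻¹ f`, and pick a unit `u` with `‖u - 1‖ ≤ p^(1-e)` and
`χ u ≠ 1`. Multiplication by `u` preserves Haar measure and `f (u y) = χ u · f y`, so the
substitution `y ↦ u y` gives `g x = χ u · g (u x)`. For `x ∈ B_n` and `y` in the support of `f`,
`‖(u - 1) x y‖ ≤ p^(2n+1-e) ≤ 1`, so `ψ (u x y) = ψ (x y)` and `g (u x) = g x`. Hence `g`
vanishes on `B_n`, and `Q_n φ` is the Fourier transform of `1_{B_n} · g = 0`. -/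

open scoped ENNReal

theorem ContinuousAddEquiv.measurePreserving_of_preimage_eq {G : Type*} [AddGroup G]
    [TopologicalSpace G] [IsTopologicalAddGroup G] [LocallyCompactSpace G]
    [SecondCountableTopology G] [MeasurableSpace G] [BorelSpace G]
    (μ : Measure G) [μ.IsAddHaarMeasure] (f : G ≃ₜ+ G) {s : Set G} (hs : MeasurableSet s)
    (hs₀ : μ s ≠ 0) (hs_top : μ s ≠ ∞) (hfs : f ⁻¹' s = s) :
    MeasurePreserving f μ μ := by
  refine ⟨(map_continuous f).measurable, ?_⟩
  have hmap : μ.map f = Measure.addHaarScalarFactor (μ.map f) μ • μ :=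
    Measure.isAddLeftInvariant_eq_smul _ μ
  have hc : (Measure.addHaarScalarFactor (μ.map f) μ : ℝ≥0∞) = 1 := by
    refine (ENNReal.mul_eq_right hs₀ hs_top).mp ?_
    calc _ = (Measure.addHaarScalarFactor (μ.map f) μ • μ) s := rfl
      _ = μ (f ⁻¹' s) := by rw [← hmap, Measure.map_apply (map_continuous f).measurable hs]
      _ = μ s := by rw [hfs]
  rw [hmap, ENNReal.smul_def, hc, one_smul]

theorem measurePreserving_mul_left_of_norm_eq_one {𝕜 : Type*} [NormedDivisionRing 𝕜]
    [ProperSpace 𝕜] [MeasurableSpace 𝕜] [BorelSpace 𝕜] (μ : Measure 𝕜) [μ.IsAddHaarMeasure]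
    {u : 𝕜} (hu : ‖u‖ = 1) : MeasurePreserving (u * ·) μ μ := by
  have hu₀ : u ≠ 0 := norm_ne_zero_iff.mp (by simp [hu])
  refine (ContinuousAddEquiv.mulLeft (Units.mk0 u hu₀)).measurePreserving_of_preimage_eq μ
    (s := Metric.closedBall 0 1) Metric.isClosed_closedBall.measurableSet
    (Metric.measure_closedBall_pos μ 0 one_pos).ne' measure_closedBall_lt_top.ne ?_
  ext y
  simp [norm_mul, hu]

namespace Padic

variable {p : ℕ} [Fact p.Prime]

theorem ballInd_eq_zero_iff {j : ℤ} {x : ℚ_[p]} : ballInd p j x = 0 ↔ (p : ℝ) ^ j < ‖x‖ := by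
  simp [ballInd, Set.indicator_apply]

theorem ballInd_mul_eq_zero {j : ℤ} {g : ℚ_[p] → ℂ} (hg : ∀ y, ‖y‖ ≤ (p : ℝ) ^ j → g y = 0)
    (x : ℚ_[p]) : ballInd p j x * g x = 0 := by
  by_cases hx : ‖x‖ ≤ (p : ℝ) ^ j
  · rw [hg x hx, mul_zero]
  · rw [ballInd_eq_zero_iff.mpr (not_le.mp hx), zero_mul]

theorem norm_le_of_ballInd_mul_ne_zero {j : ℤ} {g : ℚ_[p] → ℂ} {x : ℚ_[p]}
    (hx : ballInd p j x * g x ≠ 0) : ‖x‖ ≤ (p : ℝ) ^ j :=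
  not_lt.mp fun h => hx (by rw [ballInd_eq_zero_iff.mpr h, zero_mul])

theorem ballInd_mul_left_of_norm_eq_one (j : ℤ) {u : ℚ_[p]} (hu : ‖u‖ = 1) (x : ℚ_[p]) :
    ballInd p j (u * x) = ballInd p j x := by
  simp [ballInd, Set.indicator_apply, norm_mul, hu]

theorem norm_mul_mul_le_one {a x y : ℚ_[p]} {i j k : ℤ} (ha : ‖a‖ ≤ (p : ℝ) ^ (-k))
    (hx : ‖x‖ ≤ (p : ℝ) ^ i) (hy : ‖y‖ ≤ (p : ℝ) ^ j) (hijk : i + j ≤ k) :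
    ‖a * x * y‖ ≤ 1 := by
  have hp : (1 : ℝ) < p := mod_cast (Fact.out : p.Prime).one_lt
  calc ‖a * x * y‖ ≤ (p : ℝ) ^ (-k) * (p : ℝ) ^ i * (p : ℝ) ^ j := by
        rw [norm_mul, norm_mul]; gcongr
    _ = (p : ℝ) ^ (-k + i + j) := by rw [zpow_add₀ (by positivity), zpow_add₀ (by positivity)]
    _ ≤ 1 := zpow_le_one_of_nonpos₀ hp.le (by omega)

variable [MeasurableSpace ℚ_[p]] {μ : Measure ℚ_[p]} {ψ : ℚ_[p] → ℂ}

theorem fourierInvT_mul_left_eq (hψ_add : ∀ x y, ψ (x + y) = ψ x * ψ y)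
    (hψ_triv : ∀ x : ℚ_[p], ‖x‖ ≤ 1 → ψ x = 1) {f : ℚ_[p] → ℂ} {u x : ℚ_[p]}
    (hf : ∀ y, f y ≠ 0 → ‖(u - 1) * x * y‖ ≤ 1) :
    fourierInvT p μ ψ f (u * x) = fourierInvT p μ ψ f x := by
  refine integral_congr_ae (Filter.Eventually.of_forall fun y => ?_)
  by_cases hy : f y = 0
  · simp [hy]
  · have hsplit : u * x * y = x * y + (u - 1) * x * y := by ring
    simp only [hsplit, hψ_add, hψ_triv _ (hf y hy), mul_one]

theorem fourierInvT_eq_mul_fourierInvT_mul_left [BorelSpace ℚ_[p]] {f : ℚ_[p] → ℂ}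
    {u : ℚ_[p]} {c : ℂ} (hu : u ≠ 0) (hμ : MeasurePreserving (u * ·) μ μ)
    (hf : ∀ y, f (u * y) = c * f y) (x : ℚ_[p]) :
    fourierInvT p μ ψ f x = c * fourierInvT p μ ψ f (u * x) := by
  have hemb : MeasurableEmbedding (u * ·) :=
    (Homeomorph.mulLeft₀ u hu).toMeasurableEquiv.measurableEmbedding
  calc fourierInvT p μ ψ f x = ∫ y, f (u * y) * ψ (x * (u * y)) ∂μ :=
        (hμ.integral_comp hemb fun z => f z * ψ (x * z)).symm
    _ = c * fourierInvT p μ ψ f (u * x) := by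
        rw [fourierInvT, ← integral_const_mul]
        simp only [hf, mul_left_comm x u, mul_assoc]

end Padic

open Padic

theorem Qop_kills_large_conductor_general (p : ℕ) [Fact p.Prime]
    [MeasurableSpace ℚ_[p]] [BorelSpace ℚ_[p]]
    (μ : Measure ℚ_[p]) [μ.IsAddHaarMeasure]
    (ψ : ℚ_[p] → ℂ)
    (hψ_add : ∀ x y : ℚ_[p], ψ (x + y) = ψ x * ψ y)
    (hψ_triv : ∀ x : ℚ_[p], ‖x‖ ≤ 1 → ψ x = 1)
    (n : ℕ) (e : ℕ) (hne : 2 * n < e) (χ : ℚ_[p] → ℂ)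
    (hχ_min : ∃ u₀ : ℚ_[p], ‖u₀‖ = 1 ∧ ‖u₀ - 1‖ ≤ (p : ℝ) ^ (-((e : ℤ) - 1)) ∧ χ u₀ ≠ 1)
    (φ : ℚ_[p] → ℂ)
    (hφeq : ∀ (u x : ℚ_[p]), ‖u‖ = 1 → φ (u * x) = χ u * φ x) :
    ∀ x : ℚ_[p], Qop p μ ψ n φ x = 0 := by
  obtain ⟨u, hu, hu_near, hχu⟩ := hχ_min
  set f : ℚ_[p] → ℂ := fun y => ballInd p n y * φ y
  have hf_equivariant : ∀ y, f (u * y) = χ u * f y := fun y => by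
    simp only [f, ballInd_mul_left_of_norm_eq_one _ hu, hφeq u y hu]
    ring
  have hvanish : ∀ x : ℚ_[p], ‖x‖ ≤ (p : ℝ) ^ (n : ℤ) → fourierInvT p μ ψ f x = 0 := by
    intro x hx
    have hscale : fourierInvT p μ ψ f x = χ u * fourierInvT p μ ψ f (u * x) :=
      fourierInvT_eq_mul_fourierInvT_mul_left (norm_ne_zero_iff.mp (by simp [hu]))
        (measurePreserving_mul_left_of_norm_eq_one μ hu) hf_equivariant x
    have hfix : fourierInvT p μ ψ f (u * x) = fourierInvT p μ ψ f x :=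
      fourierInvT_mul_left_eq hψ_add hψ_triv fun y hy =>
        norm_mul_mul_le_one hu_near hx (norm_le_of_ballInd_mul_ne_zero hy) (by omega)
    rw [hfix] at hscale
    by_contra hne_zero
    exact hχu ((mul_eq_right₀ hne_zero).mp hscale.symm)
  intro x
  change fourierT p μ ψ (fun y => ballInd p n y * fourierInvT p μ ψ f y) x = 0
  simp only [fourierT, ballInd_mul_eq_zero hvanish, zero_mul, integral_zero]

/-- Theorem XI, ramified components with conductor `e > 2n` are killed by `Q_n`. -/
theorem Qop_kills_large_conductor (p : ℕ) [Fact p.Prime]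
    [MeasurableSpace ℚ_[p]] [BorelSpace ℚ_[p]]
    (μ : Measure ℚ_[p]) [μ.IsAddHaarMeasure]
    (hμ : μ {x : ℚ_[p] | ‖x‖ ≤ 1} = 1)
    (ψ : ℚ_[p] → ℂ) (hψ_cont : Continuous ψ)
    (hψ_add : ∀ x y : ℚ_[p], ψ (x + y) = ψ x * ψ y)
    (hψ_norm : ∀ x : ℚ_[p], ‖ψ x‖ = 1)
    (hψ_triv : ∀ x : ℚ_[p], ‖x‖ ≤ 1 → ψ x = 1)
    (hψ_nontriv : ∃ x₀ : ℚ_[p], ‖x₀‖ = (p : ℝ) ∧ ψ x₀ ≠ 1)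
    (n : ℕ) (e : ℕ) (he : 1 ≤ e) (hne : 2 * n < e) (χ : ℚ_[p] → ℂ)
    (hχ_norm : ∀ u : ℚ_[p], ‖u‖ = 1 → ‖χ u‖ = 1)
    (hχ_mul : ∀ u v : ℚ_[p], ‖u‖ = 1 → ‖v‖ = 1 → χ (u * v) = χ u * χ v)
    (hχ_cond : ∀ u : ℚ_[p], ‖u‖ = 1 → ‖u - 1‖ ≤ (p : ℝ) ^ (-(e : ℤ)) → χ u = 1)
    (hχ_min : ∃ u₀ : ℚ_[p], ‖u₀‖ = 1 ∧ ‖u₀ - 1‖ ≤ (p : ℝ) ^ (-((e : ℤ) - 1)) ∧ χ u₀ ≠ 1)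
    (φ : ℚ_[p] → ℂ) (hφ : IsSchwartzBruhat φ)
    (hφeq : ∀ (u x : ℚ_[p]), ‖u‖ = 1 → φ (u * x) = χ u * φ x) :
    ∀ x : ℚ_[p], Qop p μ ψ n φ x = 0 :=
  Qop_kills_large_conductor_general p μ ψ hψ_add hψ_triv n e hne χ hχ_min φ hφeq
end

section
/- (The Hardy-space Lemma: a unimodular multiplier preserving the Hardy space in both directions is constant) Let u : AddCircle (1 : ℝ) → ℂ be measurable with ‖u(θ)‖ = 1 for almost every θ (with respect to the normalized Haar measure). Assume that for every square-integrable f : AddCircle (1 : ℝ) → ℂ whose Fourier coefficients of all negative indices vanish (fourierCoeff f n = 0 for all integers n < 0), the pointwise products θ ↦ u(θ)·f(θ) and θ ↦ conj(u(θ))·f(θ) also have vanishing Fourier coefficients at every negative index. Then there exists a constant c ∈ ℂ with ‖c‖ = 1 such that u(θ) = c for almost every θ. -/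
open MeasureTheory Complex ComplexConjugate

/-!
Testing the hypothesis on the constant function `1` shows that `u` and `conj u` both lie in the
Hardy space. Since the Fourier coefficients of `conj u` are the conjugates of those of `u` at the
opposite indices, every coefficient of `u` except the zeroth vanishes, so `u` agrees in `L²` with
the constant `fourierCoeff u 0`; that constant is unimodular because `u` is.
-/

section FourierCoeff

variable {T : ℝ} [Fact (0 < T)]

local notation "haar" => (AddCircle.haarAddCircle : Measure (AddCircle T))

theorem fourierCoeff_const (c : ℂ) :
    fourierCoeff (fun _ : AddCircle T => c) = Pi.single 0 c := by
  have hc : (fun _ : AddCircle T => c) = fun t => c * fourier 0 t := by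
    simp only [fourier_zero, mul_one]
  ext n
  rw [hc, fourierCoeff.const_mul, fourierCoeff_fourier]
  by_cases hn : n = 0 <;> simp [hn]

theorem fourierCoeff_conj (f : AddCircle T → ℂ) (n : ℤ) :
    fourierCoeff (fun t => conj (f t)) n = conj (fourierCoeff f (-n)) := by
  rw [fourierCoeff, fourierCoeff, ← integral_conj]
  congr 1 with t
  simp only [smul_eq_mul, map_mul, neg_neg, fourier_neg]

theorem ae_eq_zero_of_fourierCoeff_eq_zero {f : AddCircle T → ℂ} (hf : MemLp f 2 haar)
    (h : ∀ n, fourierCoeff f n = 0) : f =ᵐ[haar] 0 := by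
  have hrepr : fourierBasis.repr (hf.toLp f) = 0 := by
    ext n
    rw [fourierBasis_repr, fourierCoeff_congr_ae hf.coeFn_toLp, h]
    rfl
  have hzero : hf.toLp f = 0 := fourierBasis.repr.map_eq_zero_iff.mp hrepr
  calc f =ᵐ[haar] hf.toLp f := hf.coeFn_toLp.symm
    _ =ᵐ[haar] 0 := by rw [hzero]; exact Lp.coeFn_zero _ _ _

theorem ae_eq_const_of_fourierCoeff_eq_zero {f : AddCircle T → ℂ} (hf : MemLp f 2 haar)
    (h : ∀ n ≠ 0, fourierCoeff f n = 0) : f =ᵐ[haar] fun _ => fourierCoeff f 0 := by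
  set c := fourierCoeff f 0
  have hsub : f - (fun _ => c) =ᵐ[haar] 0 := by
    refine ae_eq_zero_of_fourierCoeff_eq_zero (hf.sub (memLp_const c)) fun n => ?_
    rw [sub_eq_add_neg, fourierCoeff.add (hf.integrable one_le_two) (integrable_const c).neg]
    by_cases hn : n = 0
    · simp [hn, Pi.neg_def, fourierCoeff_const, c]
    · simp [hn, h n hn, Pi.neg_def, fourierCoeff_const]
  filter_upwards [hsub] with t ht
  exact sub_eq_zero.mp ht

theorem ae_eq_const_of_fourierCoeff_neg_eq_zero_of_conj {f : AddCircle T → ℂ}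
    (hf : MemLp f 2 haar) (hneg : ∀ n < 0, fourierCoeff f n = 0)
    (hneg_conj : ∀ n < 0, fourierCoeff (fun t => conj (f t)) n = 0) :
    f =ᵐ[haar] fun _ => fourierCoeff f 0 := by
  refine ae_eq_const_of_fourierCoeff_eq_zero hf fun n hn => ?_
  rcases hn.lt_or_gt with hn | hn
  · exact hneg n hn
  · simpa [fourierCoeff_conj] using hneg_conj (-n) (neg_neg_of_pos hn)

end FourierCoeff

/-- The Hardy-space Lemma: a unimodular multiplier on the circle preserving the
Hardy space in both directions is a.e. a constant of modulus one. -/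
theorem unimodular_hardy_multiplier_const
    (u : AddCircle (1 : ℝ) → ℂ) (hmeas : Measurable u)
    (hnorm : ∀ᵐ θ ∂(AddCircle.haarAddCircle : Measure (AddCircle (1 : ℝ))), ‖u θ‖ = 1)
    (hH : ∀ f : AddCircle (1 : ℝ) → ℂ,
      MemLp f 2 (AddCircle.haarAddCircle : Measure (AddCircle (1 : ℝ))) →
      (∀ n : ℤ, n < 0 → fourierCoeff f n = 0) →
      (∀ n : ℤ, n < 0 → fourierCoeff (fun θ => u θ * f θ) n = 0) ∧
      (∀ n : ℤ, n < 0 → fourierCoeff (fun θ => (starRingEnd ℂ) (u θ) * f θ) n = 0)) :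
    ∃ c : ℂ, ‖c‖ = 1 ∧
      ∀ᵐ θ ∂(AddCircle.haarAddCircle : Measure (AddCircle (1 : ℝ))), u θ = c := by
  have hu : MemLp u 2 AddCircle.haarAddCircle :=
    MemLp.of_bound hmeas.aestronglyMeasurable 1 (hnorm.mono fun θ h => h.le)
  obtain ⟨hneg, hneg_conj⟩ := hH (fun _ => 1) (memLp_const 1) fun n hn => by
    simp [fourierCoeff_const, hn.ne]
  simp only [mul_one] at hneg hneg_conj
  have hconst := ae_eq_const_of_fourierCoeff_neg_eq_zero_of_conj hu hneg hneg_conj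
  obtain ⟨θ, hθ, hθ_norm⟩ := (hconst.and hnorm).exists
  refine ⟨fourierCoeff u 0, ?_, hconst⟩
  rwa [← show u θ = fourierCoeff u 0 from hθ]
end

section
/- (Tate's local zeta integral for the characteristic function of the integers; the basic computation behind Theorem I at δ = 0) Let s ∈ ℂ with 0 < Re(s). Then the function x ↦ (‖x‖ : ℂ)^(s−1) (the complex power of the real number ‖x‖_p, defined to be 0 at x = 0) is μ-integrable on the closed unit ball {x : ‖x‖ ≤ 1}, and ∫_{‖x‖ ≤ 1} ‖x‖^(s−1) dμ(x) = (1 − p⁻¹) / (1 − p^(−s)). -/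
/-!
Scaling by `p` multiplies Haar measure by `p⁻¹`: `p • ℤ_[p]` is the open unit ball, and `ℤ_[p]` is
the disjoint union of its `p` translates `i + p • ℤ_[p]`, `i < p`. Hence the sphere `‖x‖ = p⁻ⁿ`
has measure `(1 - p⁻¹) p⁻ⁿ`, the integrand is the constant `p^{-n(s-1)}` on it, and the integral
is the geometric series `(1 - p⁻¹) ∑ₙ p^{-ns}`.
-/

open MeasureTheory Metric
open scoped ENNReal NNReal Pointwise

namespace MeasureTheory

variable {X E ι : Type*} [MeasurableSpace X] {μ : Measure X} [NormedAddCommGroup E]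
  [Countable ι] {s : ι → Set X} {f : X → E} {c : ι → E}

theorem integrableOn_iUnion_of_eqOn_const (hs : ∀ i, MeasurableSet (s i))
    (hμs : ∀ i, μ (s i) ≠ ∞) (hf : ∀ i, Set.EqOn f (fun _ => c i) (s i))
    (hc : Summable fun i => μ.real (s i) * ‖c i‖) : IntegrableOn f (⋃ i, s i) μ := by
  have hfi (i : ι) : IntegrableOn f (s i) μ :=
    (integrableOn_const (hμs i)).congr_fun (fun x hx => (hf i hx).symm) (hs i)
  refine integrableOn_iUnion_of_summable_integral_norm hfi (hc.congr fun i => ?_)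
  rw [setIntegral_congr_fun (hs i) fun x hx => congrArg norm (hf i hx), setIntegral_const,
    smul_eq_mul]

theorem integral_iUnion_of_eqOn_const [NormedSpace ℝ E] [CompleteSpace E]
    (hs : ∀ i, MeasurableSet (s i))
    (hd : Pairwise (Function.onFun Disjoint s)) (hf : ∀ i, Set.EqOn f (fun _ => c i) (s i))
    (hfi : IntegrableOn f (⋃ i, s i) μ) :
    ∫ x in ⋃ i, s i, f x ∂μ = ∑' i, μ.real (s i) • c i := by
  rw [integral_iUnion hs hd hfi]
  exact tsum_congr fun i => by rw [setIntegral_congr_fun (hs i) (hf i), setIntegral_const]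

end MeasureTheory

namespace Padic

variable {p : ℕ} [Fact p.Prime]

theorem closedBall_zero_one_eq_iUnion_ball :
    closedBall (0 : ℚ_[p]) 1 = ⋃ i : Fin p, ball ((i : ℕ) : ℚ_[p]) 1 := by
  ext x
  simp only [mem_closedBall_zero_iff, Set.mem_iUnion, mem_ball, dist_eq_norm]
  constructor
  · intro hx
    obtain ⟨n, hnp, hn⟩ := PadicInt.exists_mem_range ⟨x, hx⟩
    rw [IsLocalRing.mem_maximalIdeal, PadicInt.mem_nonunits] at hn
    exact ⟨⟨n, hnp⟩, hn⟩
  · rintro ⟨i, hi⟩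
    calc ‖x‖ = ‖(x - (i : ℕ)) + ((i : ℕ) : ℚ_[p])‖ := by rw [sub_add_cancel]
      _ ≤ max ‖x - (i : ℕ)‖ ‖((i : ℕ) : ℚ_[p])‖ := Padic.nonarchimedean _ _
      _ ≤ 1 := max_le hi.le (by exact_mod_cast norm_int_le_one (i : ℤ))

theorem pairwise_disjoint_ball_natCast :
    Pairwise (Function.onFun Disjoint fun i : Fin p => ball ((i : ℕ) : ℚ_[p]) 1) := by
  intro i j hij
  refine Set.disjoint_left.2 fun x hxi hxj => hij ?_
  have hji : ((j : ℕ) : ℚ_[p]) ∈ ball ((i : ℕ) : ℚ_[p]) 1 := by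
    rw [IsUltrametricDist.ball_eq_of_mem hxi, ← IsUltrametricDist.ball_eq_of_mem hxj]
    exact mem_ball_self one_pos
  rw [mem_ball, dist_eq_norm, ← Int.cast_natCast, ← Int.cast_natCast (R := ℚ_[p]) i,
    ← Int.cast_sub, norm_intCast_lt_one_iff] at hji
  have := Int.eq_of_sub_eq_zero (Int.eq_zero_of_abs_lt_dvd hji (by rw [abs_lt]; omega))
  exact Fin.ext (by omega)

theorem ball_zero_inv_pow_eq_closedBall (n : ℕ) :
    ball (0 : ℚ_[p]) ((p : ℝ)⁻¹ ^ n) = closedBall 0 ((p : ℝ)⁻¹ ^ (n + 1)) := by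
  have h (k : ℕ) : (p : ℝ)⁻¹ ^ k = (p : ℝ) ^ (-(k : ℤ)) := by rw [zpow_neg, zpow_natCast, inv_pow]
  ext x
  rw [mem_ball_zero_iff, mem_closedBall_zero_iff, h, h, norm_lt_pow_iff_norm_le_pow_sub_one]
  push_cast
  ring_nf

theorem natCast_p_pow_smul_closedBall_zero (n : ℕ) (r : ℝ) :
    (p : ℚ_[p]) ^ n • closedBall (0 : ℚ_[p]) r = closedBall 0 ((p : ℝ)⁻¹ ^ n * r) := by
  rw [smul_closedBall' (pow_ne_zero n (Nat.cast_ne_zero.2 (Fact.out : p.Prime).ne_zero)),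
    smul_zero, norm_pow, norm_p]

theorem closedBall_zero_one_eq_insert_iUnion_sphere :
    closedBall (0 : ℚ_[p]) 1 = insert 0 (⋃ n : ℕ, sphere 0 ((p : ℝ)⁻¹ ^ n)) := by
  have hp : (1 : ℝ) < p := by exact_mod_cast (Fact.out : p.Prime).one_lt
  ext x
  rcases eq_or_ne x 0 with rfl | hx
  · simp
  simp only [mem_closedBall_zero_iff, Set.mem_insert_iff, hx, false_or, Set.mem_iUnion,
    mem_sphere_zero_iff_norm]
  constructor
  · intro h
    refine ⟨x.valuation.toNat, ?_⟩
    rw [norm_eq_zpow_neg_valuation hx, inv_pow, ← zpow_natCast,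
      Int.toNat_of_nonneg ((norm_le_one_iff_val_nonneg x).1 h), zpow_neg]
  · rintro ⟨n, hn⟩
    exact hn ▸ pow_le_one₀ (by positivity) (inv_le_one_of_one_le₀ hp.le)

theorem pairwise_disjoint_sphere_zero_inv_pow :
    Pairwise (Function.onFun Disjoint fun n : ℕ => sphere (0 : ℚ_[p]) ((p : ℝ)⁻¹ ^ n)) := by
  have hp : (1 : ℝ) < p := by exact_mod_cast (Fact.out : p.Prime).one_lt
  intro m n hmn
  refine Set.disjoint_left.2 fun x hm hn => hmn ?_
  rw [mem_sphere_zero_iff_norm] at hm hn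
  exact (pow_right_strictAnti₀ (by positivity) (inv_lt_one_of_one_lt₀ hp)).injective (hm ▸ hn)

section Haar

variable [MeasurableSpace ℚ_[p]] [BorelSpace ℚ_[p]] (μ : Measure ℚ_[p]) [μ.IsAddHaarMeasure]

theorem natCast_mul_measure_ball_zero_one :
    (p : ℝ≥0∞) * μ (ball 0 1) = μ (closedBall 0 1) := by
  rw [closedBall_zero_one_eq_iUnion_ball,
    measure_iUnion pairwise_disjoint_ball_natCast fun _ => measurableSet_ball]
  simp [Measure.addHaar_ball_center]

omit [MeasurableSpace ℚ_[p]] [BorelSpace ℚ_[p]] in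
theorem distribHaarChar_natCast_p (hp : (p : ℚ_[p]) ≠ 0) :
    distribHaarChar ℚ_[p] (Units.mk0 (p : ℚ_[p]) hp) = (p : ℝ≥0)⁻¹ := by
  borelize ℚ_[p]
  have hB : Measure.addHaar (closedBall (0 : ℚ_[p]) 1) ≠ 0 :=
    (measure_closedBall_pos _ _ one_pos).ne'
  refine distribHaarChar_eq_of_measure_smul_eq_mul hB
    (isCompact_closedBall 0 1).measure_lt_top.ne ?_
  rw [Units.smul_mk0, ← pow_one (p : ℚ_[p]), natCast_p_pow_smul_closedBall_zero, mul_one,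
    ← zero_add 1, ← ball_zero_inv_pow_eq_closedBall, pow_zero,
    ← natCast_mul_measure_ball_zero_one, ← mul_assoc, ENNReal.coe_inv (by simpa using hp),
    ENNReal.coe_natCast, ENNReal.inv_mul_cancel (by simpa using hp) (ENNReal.natCast_ne_top p),
    one_mul]

theorem measure_closedBall_zero_inv_pow (n : ℕ) :
    μ (closedBall 0 ((p : ℝ)⁻¹ ^ n)) = (p : ℝ≥0∞)⁻¹ ^ n * μ (closedBall 0 1) := by
  have hp : (p : ℚ_[p]) ≠ 0 := Nat.cast_ne_zero.2 (Fact.out : p.Prime).ne_zero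
  rw [← mul_one ((p : ℝ)⁻¹ ^ n), ← natCast_p_pow_smul_closedBall_zero,
    ← Units.val_mk0 hp, ← Units.val_pow_eq_pow_val, ← Units.smul_def,
    ← distribHaarChar_mul, map_pow, distribHaarChar_natCast_p, ENNReal.coe_pow,
    ENNReal.coe_inv (by simpa using hp), ENNReal.coe_natCast]

theorem measureReal_sphere_zero_inv_pow (n : ℕ) :
    μ.real (sphere 0 ((p : ℝ)⁻¹ ^ n)) =
      (1 - (p : ℝ)⁻¹) * (p : ℝ)⁻¹ ^ n * μ.real (closedBall 0 1) := by
  rw [← closedBall_sdiff_ball, measureReal_sdiff ball_subset_closedBall measurableSet_ball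
      (isCompact_closedBall _ _).measure_lt_top.ne,
    measureReal_def, measureReal_def, measureReal_def, ball_zero_inv_pow_eq_closedBall,
    measure_closedBall_zero_inv_pow, measure_closedBall_zero_inv_pow]
  simp only [ENNReal.toReal_mul, ENNReal.toReal_pow, ENNReal.toReal_inv, ENNReal.toReal_natCast]
  ring

variable {E : Type*} [NormedAddCommGroup E] {g : ℝ → E}

theorem integrableOn_closedBall_zero_one_norm_comp
    (hg : Summable fun n : ℕ => (p : ℝ)⁻¹ ^ n * ‖g ((p : ℝ)⁻¹ ^ n)‖) :
    IntegrableOn (fun x => g ‖x‖) (closedBall 0 1) μ := by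
  rw [closedBall_zero_one_eq_insert_iUnion_sphere]
  refine (integrableOn_iUnion_of_eqOn_const (fun _ => isClosed_sphere.measurableSet)
    (fun _ => (isCompact_sphere _ _).measure_lt_top.ne)
    (fun _ _ hx => congrArg g (mem_sphere_zero_iff_norm.1 hx)) ?_).congr_set_ae
    (insert_ae_eq_self _ _)
  simp_rw [measureReal_sphere_zero_inv_pow]
  exact (hg.mul_left ((1 - (p : ℝ)⁻¹) * μ.real (closedBall 0 1))).congr fun n => by ring

theorem integral_closedBall_zero_one_norm_comp [NormedSpace ℝ E] [CompleteSpace E]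
    (hg : IntegrableOn (fun x => g ‖x‖) (closedBall 0 1) μ) :
    ∫ x in closedBall 0 1, g ‖x‖ ∂μ = ∑' n : ℕ,
      ((1 - (p : ℝ)⁻¹) * (p : ℝ)⁻¹ ^ n * μ.real (closedBall 0 1)) • g ((p : ℝ)⁻¹ ^ n) := by
  simp_rw [← measureReal_sphere_zero_inv_pow]
  rw [closedBall_zero_one_eq_insert_iUnion_sphere] at hg ⊢
  rw [setIntegral_congr_set (insert_ae_eq_self _ _)]
  exact integral_iUnion_of_eqOn_const (fun _ => isClosed_sphere.measurableSet)
    pairwise_disjoint_sphere_zero_inv_pow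
    (fun _ _ hx => congrArg g (mem_sphere_zero_iff_norm.1 hx))
    (hg.congr_set_ae (insert_ae_eq_self _ _).symm)

end Haar

end Padic

namespace Complex

theorem norm_natCast_cpow_neg_lt_one {a : ℕ} (ha : 1 < a) {s : ℂ} (hs : 0 < s.re) :
    ‖(a : ℂ) ^ (-s)‖ < 1 := by
  rw [norm_natCast_cpow_of_pos (by omega), neg_re]
  exact Real.rpow_lt_one_of_one_lt_of_neg (by exact_mod_cast ha) (neg_lt_zero.2 hs)

theorem ofReal_inv_pow_mul_cpow_sub_one {a : ℕ} (ha : 0 < a) (n : ℕ) (s : ℂ) :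
    (((a : ℝ)⁻¹ ^ n : ℝ) : ℂ) * (((a : ℝ)⁻¹ ^ n : ℝ) : ℂ) ^ (s - 1) = ((a : ℂ) ^ (-s)) ^ n := by
  have hx : 0 < (a : ℝ)⁻¹ := by positivity
  have hxn : (((a : ℝ)⁻¹ ^ n : ℝ) : ℂ) ≠ 0 := ofReal_ne_zero.2 (pow_pos hx n).ne'
  calc (((a : ℝ)⁻¹ ^ n : ℝ) : ℂ) * (((a : ℝ)⁻¹ ^ n : ℝ) : ℂ) ^ (s - 1)
      = (((a : ℝ)⁻¹ ^ n : ℝ) : ℂ) ^ (1 + (s - 1)) := by rw [cpow_add _ _ hxn, cpow_one]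
    _ = ((((a : ℝ)⁻¹ : ℝ) : ℂ) ^ s) ^ n := by
        rw [add_sub_cancel, ← Real.rpow_natCast, ← cpow_mul_ofReal_nonneg hx.le, ofReal_natCast,
          cpow_nat_mul]
    _ = ((a : ℂ) ^ (-s)) ^ n := by
        rw [ofReal_inv, ofReal_natCast, inv_cpow _ _ (by simp [Real.pi_ne_zero.symm]), cpow_neg]

end Complex

open Complex in
open scoped Classical in
/-- Tate's local zeta integral for the characteristic function of the integers
(`δ = 0`): for `Re s > 0`, `∫_{‖x‖ ≤ 1} ‖x‖^{s−1} dμ(x) = (1 − p⁻¹)/(1 − p^{−s})`. -/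
theorem tate_local_zeta_integral (p : ℕ) [Fact p.Prime]
    [MeasurableSpace ℚ_[p]] [BorelSpace ℚ_[p]]
    (μ : Measure ℚ_[p]) [μ.IsAddHaarMeasure]
    (hμ : μ {x : ℚ_[p] | ‖x‖ ≤ 1} = 1)
    (s : ℂ) (hs : 0 < s.re) :
    IntegrableOn (fun x : ℚ_[p] =>
        if x = 0 then 0 else (‖x‖ : ℂ) ^ (s - 1)) {x : ℚ_[p] | ‖x‖ ≤ 1} μ ∧
      ∫ x in {x : ℚ_[p] | ‖x‖ ≤ 1},
          (if x = 0 then 0 else (‖x‖ : ℂ) ^ (s - 1)) ∂μ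
        = (1 - (p : ℂ)⁻¹) / (1 - (p : ℂ) ^ (-s)) := by
  have hB : {x : ℚ_[p] | ‖x‖ ≤ 1} = closedBall 0 1 := by ext; simp
  have hterm (n : ℕ) := ofReal_inv_pow_mul_cpow_sub_one (Fact.out : p.Prime).pos n s
  have hps := norm_natCast_cpow_neg_lt_one (Fact.out : p.Prime).one_lt hs
  have hsum : Summable fun n : ℕ => (p : ℝ)⁻¹ ^ n * ‖(((p : ℝ)⁻¹ ^ n : ℝ) : ℂ) ^ (s - 1)‖ := by
    refine (summable_geometric_of_lt_one (norm_nonneg _) hps).congr fun n => ?_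
    rw [← norm_pow, ← hterm, norm_mul, norm_real, Real.norm_of_nonneg (by positivity)]
  have hint : IntegrableOn (fun x : ℚ_[p] => (‖x‖ : ℂ) ^ (s - 1)) (closedBall 0 1) μ :=
    Padic.integrableOn_closedBall_zero_one_norm_comp (g := fun r : ℝ => (r : ℂ) ^ (s - 1))
      μ hsum
  have hf : (fun x : ℚ_[p] => if x = 0 then 0 else (‖x‖ : ℂ) ^ (s - 1))
      =ᵐ[μ.restrict (closedBall 0 1)] fun x => (‖x‖ : ℂ) ^ (s - 1) :=
    ae_restrict_of_ae ((μ.ae_ne 0).mono fun x hx => if_neg hx)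
  rw [hB] at hμ ⊢
  refine ⟨hint.congr_fun_ae hf.symm, ?_⟩
  rw [integral_congr_ae hf, Padic.integral_closedBall_zero_one_norm_comp
    (g := fun r : ℝ => (r : ℂ) ^ (s - 1)) μ hint, measureReal_def, hμ, ENNReal.toReal_one]
  calc ∑' n : ℕ, ((1 - (p : ℝ)⁻¹) * (p : ℝ)⁻¹ ^ n * 1) • (((p : ℝ)⁻¹ ^ n : ℝ) : ℂ) ^ (s - 1)
      = ∑' n : ℕ, (1 - (p : ℂ)⁻¹) * ((p : ℂ) ^ (-s)) ^ n := tsum_congr fun n => by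
        rw [real_smul, ← hterm]
        push_cast
        ring
    _ = (1 - (p : ℂ)⁻¹) / (1 - (p : ℂ) ^ (-s)) := by
        rw [tsum_mul_left, tsum_geometric_of_norm_lt_one hps, div_eq_mul_inv]
end

section
/- (Fourier transforms of ball indicator functions; in particular Tate's function ω = 1_{ℤ_p} is its own Fourier transform when δ = 0) For every integer n ∈ ℤ and every x ∈ ℚ_p, 𝓕(indicator of {y : ‖y‖ ≤ p^n})(x) = p^n · (indicator of {y : ‖y‖ ≤ p^(−n)})(x). In particular, 𝓕(1_{ℤ_p}) = 1_{ℤ_p} pointwise, where 1_{ℤ_p} is the indicator function of {y : ‖y‖ ≤ 1}. -/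
open MeasureTheory Complex

open scoped Pointwise

/-! The ball `B n = {y | ‖y‖ ≤ p ^ n}` is an additive subgroup of `ℚ_[p]`, and `y ↦ ψ (-(x * y))`
is a character on it, trivial when `‖x‖ ≤ p ^ (-n)`. Otherwise `t = -(x₀ / x)` lies in `B n` and
the character takes a value `≠ 1` at `t`, so translation invariance of `μ` forces the integral to
vanish; in the trivial case the integral is `μ (B n)`. Finally `B (n + 1)` is the disjoint union of
the `p` translates `k * p ^ (-(n + 1)) + B n`, `k < p`, whence `μ (B n) = p ^ n`. -/

theorem integral_indicator_addSubgroup_eq_zero {G : Type*} [AddGroup G] [MeasurableSpace G]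
    [MeasurableAdd G] (μ : Measure G) [μ.IsAddRightInvariant] {χ : G → ℂ}
    (hχ : ∀ a b, χ (a + b) = χ a * χ b) (H : AddSubgroup G) {t : G} (ht : t ∈ H)
    (hχt : χ t ≠ 1) : ∫ y, (H : Set G).indicator χ y ∂μ = 0 := by
  have hshift (y : G) : (H : Set G).indicator χ (y + t) = χ t * (H : Set G).indicator χ y := by
    by_cases hy : y ∈ H
    · simp [hy, H.add_mem hy ht, hχ, mul_comm]
    · simp [hy, (H.add_mem_cancel_right ht).not.2 hy]
  have hfix : χ t * ∫ y, (H : Set G).indicator χ y ∂μ = ∫ y, (H : Set G).indicator χ y ∂μ :=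
    calc χ t * ∫ y, (H : Set G).indicator χ y ∂μ
        = ∫ y, (H : Set G).indicator χ (y + t) ∂μ := by simp_rw [hshift, integral_const_mul]
      _ = ∫ y, (H : Set G).indicator χ y ∂μ := integral_add_right_eq_self _ t
  by_contra hI
  exact hχt ((mul_eq_right₀ hI).1 hfix)

namespace Padic

variable {p : ℕ} [hp : Fact p.Prime]

variable (p) in
noncomputable def closedBallZPow (n : ℤ) : AddSubgroup ℚ_[p] :=
  (IsUltrametricDist.closedBall_openAddSubgroup ℚ_[p]
    (zpow_pos (Nat.cast_pos.2 hp.out.pos) n)).toAddSubgroup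

@[simp]
lemma mem_closedBallZPow {n : ℤ} {y : ℚ_[p]} : y ∈ closedBallZPow p n ↔ ‖y‖ ≤ (p : ℝ) ^ n :=
  mem_closedBall_zero_iff

lemma coe_closedBallZPow (n : ℤ) :
    (closedBallZPow p n : Set ℚ_[p]) = {y | ‖y‖ ≤ (p : ℝ) ^ n} :=
  Set.ext fun _ ↦ mem_closedBallZPow

lemma measurableSet_closedBallZPow [MeasurableSpace ℚ_[p]] [BorelSpace ℚ_[p]] (n : ℤ) :
    MeasurableSet (closedBallZPow p n : Set ℚ_[p]) :=
  Metric.isClosed_closedBall.measurableSet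

lemma closedBallZPow_mono {m n : ℤ} (h : m ≤ n) : closedBallZPow p m ≤ closedBallZPow p n :=
  fun _ hy ↦ mem_closedBallZPow.2 <| (mem_closedBallZPow.1 hy).trans <|
    zpow_le_zpow_right₀ (by exact_mod_cast hp.out.one_lt.le) h

lemma zpow_mul_mem_closedBallZPow_iff {m n : ℤ} {y : ℚ_[p]} :
    (p : ℚ_[p]) ^ m * y ∈ closedBallZPow p n ↔ y ∈ closedBallZPow p (n + m) := by
  have hp0 := (Nat.cast_pos.2 hp.out.pos : (0 : ℝ) < p)
  rw [mem_closedBallZPow, mem_closedBallZPow, norm_mul, norm_p_zpow, zpow_neg,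
    inv_mul_le_iff₀ (zpow_pos hp0 m), ← zpow_add₀ hp0.ne', add_comm m]

lemma natCast_mem_closedBallZPow_zero (k : ℕ) : (k : ℚ_[p]) ∈ closedBallZPow p 0 := by
  simpa using norm_int_le_one (p := p) k

lemma exists_sub_natCast_mem_closedBallZPow_neg_one {z : ℚ_[p]} (hz : z ∈ closedBallZPow p 0) :
    ∃ k < p, z - k ∈ closedBallZPow p (-1) := by
  obtain ⟨k, hk, hzk⟩ := PadicInt.exists_mem_range (p := p) ⟨z, by simpa using hz⟩
  have hzk : ‖z - k‖ < 1 := PadicInt.mem_nonunits.1 hzk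
  refine ⟨k, hk, ?_⟩
  rwa [mem_closedBallZPow, norm_le_pow_iff_norm_lt_pow_add_one, neg_add_cancel, zpow_zero]

lemma eq_of_natCast_sub_mem_closedBallZPow_neg_one {k j : ℕ} (hk : k < p) (hj : j < p)
    (h : (k - j : ℚ_[p]) ∈ closedBallZPow p (-1)) : k = j := by
  rw [mem_closedBallZPow, norm_le_pow_iff_norm_lt_pow_add_one, neg_add_cancel, zpow_zero,
    show (k - j : ℚ_[p]) = ((k - j : ℤ) : ℚ_[p]) by push_cast; ring,
    norm_intCast_lt_one_iff] at h
  have := Int.eq_zero_of_abs_lt_dvd h (by rw [abs_sub_lt_iff]; omega)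
  omega

lemma closedBallZPow_succ_eq_biUnion (n : ℤ) :
    (closedBallZPow p (n + 1) : Set ℚ_[p]) =
      ⋃ k ∈ Finset.range p, ((k : ℚ_[p]) * (p : ℚ_[p]) ^ (-(n + 1))) +ᵥ
        (closedBallZPow p n : Set ℚ_[p]) := by
  have hp0 : (p : ℚ_[p]) ≠ 0 := Nat.cast_ne_zero.2 hp.out.ne_zero
  have hcoset (k : ℕ) (y : ℚ_[p]) : -((k : ℚ_[p]) * (p : ℚ_[p]) ^ (-(n + 1))) + y =
      (p : ℚ_[p]) ^ (-(n + 1)) * ((p : ℚ_[p]) ^ (n + 1) * y - k) := by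
    linear_combination (-y) * zpow_neg_mul_zpow_self (n + 1) hp0
  ext y
  simp only [SetLike.mem_coe, Set.mem_iUnion, Finset.mem_range, Set.mem_vadd_set_iff_neg_vadd_mem,
    vadd_eq_add, hcoset, zpow_mul_mem_closedBallZPow_iff]
  constructor
  · intro hy
    have hz : (p : ℚ_[p]) ^ (n + 1) * y ∈ closedBallZPow p 0 := by
      rwa [zpow_mul_mem_closedBallZPow_iff, zero_add]
    obtain ⟨k, hk, hzk⟩ := exists_sub_natCast_mem_closedBallZPow_neg_one hz
    exact ⟨k, hk, by rwa [show n + -(n + 1) = -1 by ring]⟩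
  · rintro ⟨k, -, hk⟩
    rw [show n + -(n + 1) = -1 by ring] at hk
    have hz : (p : ℚ_[p]) ^ (n + 1) * y ∈ closedBallZPow p 0 := by
      simpa using add_mem (closedBallZPow_mono (by norm_num) hk) (natCast_mem_closedBallZPow_zero k)
    rwa [zpow_mul_mem_closedBallZPow_iff, zero_add] at hz

lemma pairwiseDisjoint_vadd_closedBallZPow (n : ℤ) :
    (Finset.range p : Set ℕ).PairwiseDisjoint fun k : ℕ ↦
      ((k : ℚ_[p]) * (p : ℚ_[p]) ^ (-(n + 1))) +ᵥ (closedBallZPow p n : Set ℚ_[p]) := by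
  intro k hk j hj hkj
  refine Set.disjoint_left.2 fun y hyk hyj ↦ hkj ?_
  simp only [Finset.coe_range, Set.mem_Iio] at hk hj
  simp only [Set.mem_vadd_set_iff_neg_vadd_mem, vadd_eq_add, SetLike.mem_coe] at hyk hyj
  have hp0 : (p : ℚ_[p]) ≠ 0 := Nat.cast_ne_zero.2 hp.out.ne_zero
  have hkj : (p : ℚ_[p]) ^ (n + 1) * (-(j * (p : ℚ_[p]) ^ (-(n + 1))) + y
      - (-(k * (p : ℚ_[p]) ^ (-(n + 1))) + y)) = k - j := by
    linear_combination ((k : ℚ_[p]) - j) * zpow_neg_mul_zpow_self (n + 1) hp0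
  have hdiff := (zpow_mul_mem_closedBallZPow_iff (m := n + 1) (n := -1)).2
    (by rw [show -1 + (n + 1) = n by ring]; exact sub_mem hyj hyk)
  rw [hkj] at hdiff
  exact eq_of_natCast_sub_mem_closedBallZPow_neg_one hk hj hdiff

section Measure

variable [MeasurableSpace ℚ_[p]] [BorelSpace ℚ_[p]] (μ : Measure ℚ_[p]) [μ.IsAddLeftInvariant]

lemma measure_closedBallZPow_succ (n : ℤ) :
    μ (closedBallZPow p (n + 1)) = p * μ (closedBallZPow p n) := by
  rw [closedBallZPow_succ_eq_biUnion,
    measure_biUnion_finset (pairwiseDisjoint_vadd_closedBallZPow n)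
      fun k _ ↦ (measurableSet_closedBallZPow n).const_vadd _]
  simp only [measure_vadd, Finset.sum_const, Finset.card_range, nsmul_eq_mul]

lemma measureReal_closedBallZPow (h0 : μ (closedBallZPow p 0) = 1) (n : ℤ) :
    μ.real (closedBallZPow p n) = (p : ℝ) ^ n := by
  have hp0 : (p : ℝ) ≠ 0 := (Nat.cast_pos.2 hp.out.pos).ne'
  have succ (m : ℤ) : μ.real (closedBallZPow p (m + 1)) = p * μ.real (closedBallZPow p m) := by
    simp [measureReal_def, measure_closedBallZPow_succ]
  induction n using Int.induction_on with
  | zero => simp [measureReal_def, h0]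
  | succ k ih => rw [succ, ih, zpow_add_one₀ hp0, mul_comm]
  | pred k ih =>
    rw [← sub_add_cancel (-(k : ℤ)) 1, succ, zpow_add_one₀ hp0, mul_comm] at ih
    exact mul_right_cancel₀ hp0 ih

end Measure

theorem fourierT_indicator_closedBallZPow [MeasurableSpace ℚ_[p]] [BorelSpace ℚ_[p]]
    (μ : Measure ℚ_[p]) [μ.IsAddLeftInvariant] (h0 : μ (closedBallZPow p 0) = 1)
    {ψ : ℚ_[p] → ℂ} (hψ_add : ∀ x y, ψ (x + y) = ψ x * ψ y)
    (hψ_triv : ∀ x : ℚ_[p], ‖x‖ ≤ 1 → ψ x = 1)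
    (hψ_nontriv : ∃ x₀ : ℚ_[p], ‖x₀‖ = p ∧ ψ x₀ ≠ 1) (n : ℤ) (x : ℚ_[p]) :
    fourierT p μ ψ ((closedBallZPow p n : Set ℚ_[p]).indicator fun _ ↦ (1 : ℂ)) x =
      (p : ℂ) ^ n * (closedBallZPow p (-n) : Set ℚ_[p]).indicator (fun _ ↦ (1 : ℂ)) x := by
  have hp0 : (0 : ℝ) < p := Nat.cast_pos.2 hp.out.pos
  set B : Set ℚ_[p] := (closedBallZPow p n : Set ℚ_[p])
  have hintegrand : (fun y ↦ B.indicator (fun _ ↦ (1 : ℂ)) y * ψ (-(x * y))) =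
      B.indicator fun y ↦ ψ (-(x * y)) := by
    ext y
    by_cases hy : y ∈ B <;> simp [hy]
  simp only [fourierT, hintegrand]
  by_cases hx : x ∈ closedBallZPow p (-n)
  · have hψ_one : B.indicator (fun y ↦ ψ (-(x * y))) = B.indicator fun _ ↦ 1 :=
      Set.indicator_congr fun y hy ↦ hψ_triv _ <| by
        rw [norm_neg, norm_mul, ← zpow_neg_mul_zpow_self n hp0.ne']
        exact mul_le_mul (mem_closedBallZPow.1 hx) (mem_closedBallZPow.1 hy) (norm_nonneg _)
          (zpow_nonneg hp0.le _)
    rw [hψ_one, Set.indicator_of_mem hx,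
      integral_indicator_const _ (measurableSet_closedBallZPow n), measureReal_closedBallZPow μ h0]
    simp
  · obtain ⟨x₀, hx₀, hψx₀⟩ := hψ_nontriv
    have hx0 : x ≠ 0 := by rintro rfl; exact hx (zero_mem _)
    rw [Set.indicator_of_notMem hx, mul_zero]
    refine integral_indicator_addSubgroup_eq_zero μ (fun a b ↦ by rw [mul_add, neg_add, hψ_add])
      (closedBallZPow p n) (t := -(x₀ / x)) ?_ (by rwa [mul_neg, neg_neg, mul_div_cancel₀ _ hx0])
    have hx_large : (p : ℝ) ^ (-n + 1) ≤ ‖x‖ := by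
      rwa [mem_closedBallZPow, norm_le_pow_iff_norm_lt_pow_add_one, not_lt] at hx
    rw [mem_closedBallZPow, norm_neg, norm_div, hx₀, div_le_iff₀ (norm_pos_iff.2 hx0)]
    calc (p : ℝ) = p ^ n * p ^ (-n + 1) := by
          rw [← zpow_add₀ hp0.ne', add_neg_cancel_left, zpow_one]
      _ ≤ p ^ n * ‖x‖ := mul_le_mul_of_nonneg_left hx_large (zpow_nonneg hp0.le _)

end Padic

theorem fourier_ball_indicator_general (p : ℕ) [Fact p.Prime]
    [MeasurableSpace ℚ_[p]] [BorelSpace ℚ_[p]]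
    (μ : Measure ℚ_[p]) [μ.IsAddHaarMeasure]
    (hμ : μ {x : ℚ_[p] | ‖x‖ ≤ 1} = 1)
    (ψ : ℚ_[p] → ℂ)
    (hψ_add : ∀ x y : ℚ_[p], ψ (x + y) = ψ x * ψ y)
    (hψ_triv : ∀ x : ℚ_[p], ‖x‖ ≤ 1 → ψ x = 1)
    (hψ_nontriv : ∃ x₀ : ℚ_[p], ‖x₀‖ = (p : ℝ) ∧ ψ x₀ ≠ 1)
    : (∀ (n : ℤ) (x : ℚ_[p]),
        fourierT p μ ψ
            (Set.indicator {y : ℚ_[p] | ‖y‖ ≤ (p : ℝ) ^ n} (fun _ => (1 : ℂ))) x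
          = (p : ℂ) ^ n *
            Set.indicator {y : ℚ_[p] | ‖y‖ ≤ (p : ℝ) ^ (-n)} (fun _ => (1 : ℂ)) x) ∧
      (∀ x : ℚ_[p],
        fourierT p μ ψ
            (Set.indicator {y : ℚ_[p] | ‖y‖ ≤ 1} (fun _ => (1 : ℂ))) x
          = Set.indicator {y : ℚ_[p] | ‖y‖ ≤ 1} (fun _ => (1 : ℂ)) x) := by
  have h0 : μ (Padic.closedBallZPow p 0) = 1 := by rwa [Padic.coe_closedBallZPow, zpow_zero]
  have hball := fun n x ↦
    Padic.fourierT_indicator_closedBallZPow μ h0 hψ_add hψ_triv hψ_nontriv n x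
  simp only [Padic.coe_closedBallZPow] at hball
  exact ⟨hball, fun x ↦ by simpa using hball 0 x⟩

/-- Fourier transforms of ball indicators (`δ = 0`):
`𝓕(1_{B_n}) = p^n · 1_{B_{−n}}`; in particular Tate's function `ω = 1_{ℤ_p}`
is its own Fourier transform. -/
theorem fourier_ball_indicator (p : ℕ) [Fact p.Prime]
    [MeasurableSpace ℚ_[p]] [BorelSpace ℚ_[p]]
    (μ : Measure ℚ_[p]) [μ.IsAddHaarMeasure]
    (hμ : μ {x : ℚ_[p] | ‖x‖ ≤ 1} = 1)
    (ψ : ℚ_[p] → ℂ) (hψ_cont : Continuous ψ)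
    (hψ_add : ∀ x y : ℚ_[p], ψ (x + y) = ψ x * ψ y)
    (hψ_norm : ∀ x : ℚ_[p], ‖ψ x‖ = 1)
    (hψ_triv : ∀ x : ℚ_[p], ‖x‖ ≤ 1 → ψ x = 1)
    (hψ_nontriv : ∃ x₀ : ℚ_[p], ‖x₀‖ = (p : ℝ) ∧ ψ x₀ ≠ 1)
    : (∀ (n : ℤ) (x : ℚ_[p]),
        fourierT p μ ψ
            (Set.indicator {y : ℚ_[p] | ‖y‖ ≤ (p : ℝ) ^ n} (fun _ => (1 : ℂ))) x
          = (p : ℂ) ^ n *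
            Set.indicator {y : ℚ_[p] | ‖y‖ ≤ (p : ℝ) ^ (-n)} (fun _ => (1 : ℂ)) x) ∧
      (∀ x : ℚ_[p],
        fourierT p μ ψ
            (Set.indicator {y : ℚ_[p] | ‖y‖ ≤ 1} (fun _ => (1 : ℂ))) x
          = Set.indicator {y : ℚ_[p] | ‖y‖ ≤ 1} (fun _ => (1 : ℂ)) x) :=
  fourier_ball_indicator_general p μ hμ ψ hψ_add hψ_triv hψ_nontriv
end

section
/- (Completeness axiom for the incoming subspace: the dilates of D₋ span L²) The set of Schwartz–Bruhat functions φ : ℚ_p → ℂ (locally constant with compact support) satisfying ∫ φ dμ = 0 is dense in the space L²(ℚ_p, μ) of square-integrable functions: every square-integrable function is the L²-limit of a sequence of compactly supported locally constant functions with vanishing integral. -/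
open MeasureTheory Complex

/-! The indicator of a set of finite measure is approximated in `L²` by the indicator of a
compact clopen set squeezed between an inner compact and an outer open approximation of it, so
locally constant compactly supported functions are dense. The integral `c` of such a function
can then be removed at small cost: the Haar measure of `ℚ_p` is infinite, and spreading `c`
uniformly over a compact clopen set of measure `t` costs only `‖c‖ / √t` in `L²`. -/

open Set Filter Topology
open scoped ENNReal symmDiff

theorem isLocallyConstant_indicator_const {X E : Type*} [TopologicalSpace X] [Zero E] {V : Set X}
    (hV : IsClopen V) (c : E) : IsLocallyConstant (V.indicator fun _ => c) :=
  ((LocallyConstant.const X c).indicator hV).isLocallyConstant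

section TotallyDisconnected

variable {X : Type*} [TopologicalSpace X] [T2Space X] [LocallyCompactSpace X]
  [TotallyDisconnectedSpace X]

theorem IsCompact.exists_isClopen_isCompact_between {K U : Set X} (hK : IsCompact K)
    (hU : IsOpen U) (hKU : K ⊆ U) : ∃ V, IsClopen V ∧ IsCompact V ∧ K ⊆ V ∧ V ⊆ U := by
  obtain ⟨L, hL, hKL, hLU⟩ := exists_compact_between hK hU hKU
  choose! W hW hxW hWL using fun x (hx : x ∈ K) =>
    loc_compact_Haus_tot_disc_of_zero_dim.exists_subset_of_mem_open (hKL hx) isOpen_interior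
  obtain ⟨t, htK, hKt⟩ := hK.elim_nhds_subcover W fun x hx => (hW x hx).isOpen.mem_nhds (hxW x hx)
  have hVL : ⋃ x ∈ t, W x ⊆ L :=
    iUnion₂_subset fun x hx => (hWL x (htK x hx)).trans interior_subset
  have hV : IsClopen (⋃ x ∈ t, W x) := t.finite_toSet.isClopen_biUnion fun x hx => hW x (htK x hx)
  exact ⟨_, hV, hL.of_isClosed_subset hV.isClosed hVL, hKt, hVL.trans hLU⟩

theorem exists_seq_isClopen_isCompact_tendsto_measure_top [SigmaCompactSpace X]
    [MeasurableSpace X] (μ : Measure X) (hμ : μ univ = ∞) :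
    ∃ B : ℕ → Set X, (∀ n, IsClopen (B n) ∧ IsCompact (B n)) ∧
      Tendsto (fun n => μ (B n)) atTop (𝓝 ∞) := by
  let K := CompactExhaustion.choice X
  choose B hB hBc hKB _
    using fun n => (K.isCompact n).exists_isClopen_isCompact_between isOpen_univ (subset_univ _)
  refine ⟨B, fun n => ⟨hB n, hBc n⟩, tendsto_nhds_top_mono ?_ (Eventually.of_forall
    fun n => measure_mono (hKB n))⟩
  have h := tendsto_measure_iUnion_atTop (μ := μ) K.subset
  rwa [K.iUnion_eq, hμ] at h

end TotallyDisconnected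

section Approximation

variable {X E : Type*} [TopologicalSpace X] [T2Space X] [LocallyCompactSpace X]
  [TotallyDisconnectedSpace X] [MeasurableSpace X] [OpensMeasurableSpace X] {μ : Measure X}
  [NormedAddCommGroup E] {q : ℝ≥0∞}

theorem exists_isLocallyConstant_hasCompactSupport_eLpNorm_sub_indicator_le
    [μ.OuterRegular] [μ.InnerRegularCompactLTTop] (hq : q ≠ ∞) (c : E) {s : Set X}
    (hs : MeasurableSet s) (hμs : μ s ≠ ∞) {ε : ℝ≥0∞} (hε : ε ≠ 0) :
    ∃ g : X → E, eLpNorm (g - s.indicator fun _ => c) q μ ≤ ε ∧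
      IsLocallyConstant g ∧ HasCompactSupport g := by
  obtain ⟨η, hη, hηε⟩ := exists_eLpNorm_indicator_le (μ := μ) hq c hε
  have hη2 : (η / 2 : ℝ≥0∞) ≠ 0 := by simpa using hη.ne'
  obtain ⟨U, hsU, hU, -, hUs⟩ := hs.exists_isOpen_sdiff_lt hμs hη2
  obtain ⟨K, hKs, hK, hsK⟩ := hs.exists_isCompact_sdiff_lt hμs hη2
  obtain ⟨V, hV, hVc, hKV, hVU⟩ := hK.exists_isClopen_isCompact_between hU (hKs.trans hsU)
  refine ⟨V.indicator fun _ => c, ?_, isLocallyConstant_indicator_const hV c,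
    HasCompactSupport.intro hVc fun x hx => indicator_of_notMem hx _⟩
  have hVs : μ (V ∆ s) ≤ η := calc
    μ (V ∆ s) ≤ μ (U \ s ∪ s \ K) :=
      measure_mono (union_subset_union (sdiff_subset_sdiff_left hVU) (sdiff_subset_sdiff_right hKV))
    _ ≤ η / 2 + η / 2 := (measure_union_le _ _).trans (add_le_add hUs.le hsK.le)
    _ = η := ENNReal.add_halves _
  calc eLpNorm (V.indicator (fun _ => c) - s.indicator fun _ => c) q μ
      = eLpNorm ((V ∆ s).indicator fun _ => c) q μ :=
        eLpNorm_congr_norm_ae (Eventually.of_forall fun x =>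
          (apply_indicator_symmDiff norm_neg V s _ x).symm)
    _ ≤ ε := hηε _ hVs

theorem MeasureTheory.MemLp.exists_isLocallyConstant_hasCompactSupport_eLpNorm_sub_le
    [μ.OuterRegular] [μ.InnerRegularCompactLTTop] (hq : q ≠ ∞) {f : X → E} (hf : MemLp f q μ)
    {ε : ℝ≥0∞} (hε : ε ≠ 0) :
    ∃ g : X → E, eLpNorm (f - g) q μ ≤ ε ∧ IsLocallyConstant g ∧ HasCompactSupport g := by
  refine hf.induction_dense hq (fun g => IsLocallyConstant g ∧ HasCompactSupport g) ?_ ?_ ?_ hε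
  · intro c s hs hμs ε hε
    exact exists_isLocallyConstant_hasCompactSupport_eLpNorm_sub_indicator_le hq c hs hμs.ne hε
  · exact fun _ _ hf hg => ⟨hf.1.add hg.1, hf.2.add hg.2⟩
  · exact fun _ hg =>
      (hg.1.continuous.stronglyMeasurable_of_hasCompactSupport hg.2).aestronglyMeasurable

end Approximation

section MeanZero

variable {X E : Type*} [MeasurableSpace X] {μ : Measure X}
  [NormedAddCommGroup E] [NormedSpace ℝ E] {q : ℝ≥0∞}

theorem tendsto_eLpNorm_indicator_inv_measureReal_smul {B : ℕ → Set X}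
    (hB : ∀ n, MeasurableSet (B n)) (hBfin : ∀ n, μ (B n) ≠ ∞)
    (hBtop : Tendsto (fun n => μ (B n)) atTop (𝓝 ∞)) (hq1 : 1 < q) (hq : q ≠ ∞) (c : E) :
    Tendsto (fun n => eLpNorm ((B n).indicator fun _ => (μ.real (B n))⁻¹ • c) q μ)
      atTop (𝓝 0) := by
  have hexp : 1 / q.toReal - 1 < 0 := by
    have hq1' : 1 < q.toReal := by simpa using ENNReal.toReal_strict_mono hq hq1
    exact sub_neg.2 ((div_lt_one (zero_lt_one.trans hq1')).2 hq1')
  have hpow : Tendsto (fun n => ‖c‖ₑ * μ (B n) ^ (1 / q.toReal - 1)) atTop (𝓝 0) := by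
    have := ENNReal.Tendsto.const_mul
      ((ENNReal.continuous_rpow_const (y := 1 / q.toReal - 1)).tendsto ∞ |>.comp hBtop)
        (Or.inr (enorm_ne_top (x := c)))
    rwa [ENNReal.top_rpow_of_neg hexp, mul_zero] at this
  refine hpow.congr' ?_
  filter_upwards [hBtop.eventually_ne ENNReal.zero_ne_top.symm] with n hn
  rw [eLpNorm_indicator_const (hB n) (zero_lt_one.trans hq1).ne' hq, enorm_smul,
    measureReal_def, Real.enorm_eq_ofReal (by positivity),
    ENNReal.ofReal_inv_of_pos (ENNReal.toReal_pos hn (hBfin n)), ENNReal.ofReal_toReal (hBfin n),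
    ENNReal.rpow_sub _ _ hn (hBfin n), ENNReal.rpow_one, ENNReal.div_eq_inv_mul]
  ring

end MeanZero

section MeanZeroApproximation

variable {X E : Type*} [TopologicalSpace X] [T2Space X] [LocallyCompactSpace X]
  [TotallyDisconnectedSpace X] [MeasurableSpace X] [OpensMeasurableSpace X] {μ : Measure X}
  [NormedAddCommGroup E] [NormedSpace ℝ E] [CompleteSpace E] {q : ℝ≥0∞}

theorem IsLocallyConstant.exists_integral_eq_zero_eLpNorm_sub_le [SigmaCompactSpace X]
    [IsFiniteMeasureOnCompacts μ] (hμ : μ univ = ∞) (hq1 : 1 < q) (hq : q ≠ ∞) {g : X → E}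
    (hg : IsLocallyConstant g) (hgc : HasCompactSupport g) {ε : ℝ≥0∞} (hε : ε ≠ 0) :
    ∃ g' : X → E, (IsLocallyConstant g' ∧ HasCompactSupport g' ∧ ∫ x, g' x ∂μ = 0) ∧
      eLpNorm (g - g') q μ ≤ ε := by
  obtain ⟨B, hB, hBtop⟩ := exists_seq_isClopen_isCompact_tendsto_measure_top μ hμ
  have hlim := tendsto_eLpNorm_indicator_inv_measureReal_smul
    (fun n => (hB n).1.isOpen.measurableSet) (fun n => (hB n).2.measure_lt_top.ne) hBtop hq1 hq
    (∫ x, g x ∂μ)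
  obtain ⟨n, hnε, hn0⟩ := ((hlim.eventually (eventually_le_nhds (pos_iff_ne_zero.2 hε))).and
    (hBtop.eventually_ne ENNReal.zero_ne_top.symm)).exists
  set h := (B n).indicator fun _ => (μ.real (B n))⁻¹ • ∫ x, g x ∂μ
  have hh : IsLocallyConstant h := isLocallyConstant_indicator_const (hB n).1 _
  have hhc : HasCompactSupport h :=
    HasCompactSupport.intro (hB n).2 fun x hx => indicator_of_notMem hx _
  have hBreal : μ.real (B n) ≠ 0 :=
    ENNReal.toReal_ne_zero.2 ⟨hn0, (hB n).2.measure_lt_top.ne⟩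
  refine ⟨g - h, ⟨hg.sub hh, hgc.sub hhc, ?_⟩, by rwa [sub_sub_cancel]⟩
  rw [Pi.sub_def, integral_sub (hg.continuous.integrable_of_hasCompactSupport hgc)
    (hh.continuous.integrable_of_hasCompactSupport hhc),
    integral_indicator_const _ (hB n).1.isOpen.measurableSet, smul_inv_smul₀ hBreal, sub_self]

end MeanZeroApproximation

theorem ENNReal.exists_seq_tendsto_zero_of_forall_exists_le {α : Type*} {P : α → Prop}
    {d : α → ℝ≥0∞} (h : ∀ ε ≠ 0, ∃ a, P a ∧ d a ≤ ε) :
    ∃ u : ℕ → α, (∀ n, P (u n)) ∧ Tendsto (fun n => d (u n)) atTop (𝓝 0) := by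
  obtain ⟨ε, -, hε0, hε⟩ := exists_seq_strictAnti_tendsto' (zero_lt_one' ℝ≥0∞)
  choose u hu hdu using fun n => h (ε n) (hε0 n).1.ne'
  exact ⟨u, hu, tendsto_of_tendsto_of_tendsto_of_le_of_le tendsto_const_nhds hε
    (fun _ => zero_le) hdu⟩

theorem schwartzBruhat_meanZero_dense_L2_general (p : ℕ) [Fact p.Prime]
    [MeasurableSpace ℚ_[p]] [BorelSpace ℚ_[p]]
    (μ : Measure ℚ_[p]) [μ.IsAddHaarMeasure]
    (f : ℚ_[p] → ℂ) (hf : MemLp f 2 μ) :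
    ∃ g : ℕ → (ℚ_[p] → ℂ),
      (∀ k : ℕ, IsSchwartzBruhat (g k) ∧ ∫ x, g k x ∂μ = 0) ∧
      Filter.Tendsto (fun k => eLpNorm (fun x => f x - g k x) 2 μ)
        Filter.atTop (nhds 0) := by
  refine ENNReal.exists_seq_tendsto_zero_of_forall_exists_le
    (P := fun g => IsSchwartzBruhat g ∧ ∫ x, g x ∂μ = 0) (d := fun g => eLpNorm (f - g) 2 μ)
    fun ε hε => ?_
  have hε2 : ε / 2 ≠ 0 := by simpa using hε
  obtain ⟨g₀, hfg₀, hg₀, hg₀c⟩ :=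
    hf.exists_isLocallyConstant_hasCompactSupport_eLpNorm_sub_le ENNReal.ofNat_ne_top hε2
  obtain ⟨g, ⟨hg, hgc, hg0⟩, hg₀g⟩ := hg₀.exists_integral_eq_zero_eLpNorm_sub_le
    (measure_univ_of_isAddLeftInvariant μ) ENNReal.one_lt_two ENNReal.ofNat_ne_top hg₀c hε2
  refine ⟨g, ⟨⟨hg, hgc⟩, hg0⟩, ?_⟩
  calc eLpNorm (f - g) 2 μ = eLpNorm ((f - g₀) + (g₀ - g)) 2 μ := by rw [sub_add_sub_cancel]
    _ ≤ eLpNorm (f - g₀) 2 μ + eLpNorm (g₀ - g) 2 μ :=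
        eLpNorm_add_le (hf.aestronglyMeasurable.sub hg₀.continuous.aestronglyMeasurable)
          (hg₀.continuous.aestronglyMeasurable.sub hg.continuous.aestronglyMeasurable) one_le_two
    _ ≤ ε / 2 + ε / 2 := add_le_add hfg₀ hg₀g
    _ = ε := ENNReal.add_halves ε

/-- Completeness axiom for the incoming subspace: Schwartz–Bruhat functions
with vanishing integral are dense in `L²(ℚ_p, μ)` — every square-integrable
function is an `L²`-limit of compactly supported locally constant functions
with vanishing integral. -/
theorem schwartzBruhat_meanZero_dense_L2 (p : ℕ) [Fact p.Prime]
    [MeasurableSpace ℚ_[p]] [BorelSpace ℚ_[p]]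
    (μ : Measure ℚ_[p]) [μ.IsAddHaarMeasure]
    (hμ : μ {x : ℚ_[p] | ‖x‖ ≤ 1} = 1)
    (f : ℚ_[p] → ℂ) (hf : MemLp f 2 μ) :
    ∃ g : ℕ → (ℚ_[p] → ℂ),
      (∀ k : ℕ, IsSchwartzBruhat (g k) ∧ ∫ x, g k x ∂μ = 0) ∧
      Filter.Tendsto (fun k => eLpNorm (fun x => f x - g k x) 2 μ)
        Filter.atTop (nhds 0) :=
  schwartzBruhat_meanZero_dense_L2_general p μ f hf
end
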